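/- arXiv:1811.01510 — 10 statements merged into one kernel-verified Lean document; each statement's English description precedes it below -/
import Mathlib

section
/- Let A be an m×n rational matrix and b a vector in Q^m. There exists a vector t in Q^n with t ≥ 0 satisfying A t = b if and only if for every vector y in Q^m with yᵀA ≥ 0 we have yᵀb ≥ 0. -/
open Matrix Finset

lemma farkas_aux : ∀ (n : ℕ) {m : ℕ} (a : Fin n → Fin m → ℚ) (b : Fin m → ℚ),
    (∃ t : Fin n → ℚ, (∀ i, 0 ≤ t i) ∧ ∀ x, ∑ i, t i * a i x = b x) ∨
    (∃ y : Fin m → ℚ, (∀ i, 0 ≤ y ⬝ᵥ a i) ∧ y ⬝ᵥ b < 0)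
  | 0, m, a, b => by
    by_cases hb : b = 0
    · exact Or.inl ⟨fun _ => 0, fun i => le_refl _, fun x => by simp [hb]⟩
    · refine Or.inr ⟨-b, fun i => i.elim0, ?_⟩
      have h : 0 < b ⬝ᵥ b := by
        rcases lt_or_eq_of_le (Finset.sum_nonneg fun i _ => mul_self_nonneg (b i)) with h | h
        · exact h
        · exact absurd (dotProduct_self_eq_zero.mp h.symm) hb
      simpa [neg_dotProduct] using h
  | (n + 1), m, a, b => by
    rcases farkas_aux n (fun j => a j.castSucc) b with ⟨t, ht, hsum⟩ | ⟨y, hy, hyb⟩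
    · -- b is in the cone of the first n columns
      left
      refine ⟨Fin.snoc t 0, fun i => ?_, fun x => ?_⟩
      · induction i using Fin.lastCases with
        | last => simp
        | cast j => simpa using ht j
      · rw [Fin.sum_univ_castSucc]
        simpa using hsum x
    · -- y separates b from cone of first n columns
      set c : ℚ := y ⬝ᵥ a (Fin.last n) with hc
      by_cases hcpos : 0 ≤ c
      · right
        refine ⟨y, fun i => ?_, hyb⟩
        induction i using Fin.lastCases with
        | last => exact hcpos
        | cast j => exact hy j
      · push_neg at hcpos
        have hcne : c ≠ 0 := ne_of_lt hcpos
        -- project everything onto the hyperplane y ⬝ᵥ v = 0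
        rcases farkas_aux n
            (fun j x => a j.castSucc x - (y ⬝ᵥ a j.castSucc) / c * a (Fin.last n) x)
            (fun x => b x - (y ⬝ᵥ b) / c * a (Fin.last n) x) with
          ⟨t, ht, hsum⟩ | ⟨w, hw, hwb⟩
        · left
          set μ : ℚ := (y ⬝ᵥ b) / c - ∑ j, t j * ((y ⬝ᵥ a j.castSucc) / c) with hμ
          have hμ0 : 0 ≤ μ := by
            have h1 : 0 < (y ⬝ᵥ b) / c := div_pos_of_neg_of_neg hyb hcpos
            have h2 : ∀ j, t j * ((y ⬝ᵥ a j.castSucc) / c) ≤ 0 := fun j =>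
              mul_nonpos_of_nonneg_of_nonpos (ht j)
                (div_nonpos_of_nonneg_of_nonpos (hy j) hcpos.le)
            have h3 : ∑ j, t j * ((y ⬝ᵥ a j.castSucc) / c) ≤ 0 :=
              Finset.sum_nonpos fun j _ => h2 j
            rw [hμ]; linarith
          refine ⟨Fin.snoc t μ, fun i => ?_, fun x => ?_⟩
          · induction i using Fin.lastCases with
            | last => simpa using hμ0
            | cast j => simpa using ht j
          · rw [Fin.sum_univ_castSucc]
            simp only [Fin.snoc_castSucc, Fin.snoc_last]
            have h := hsum x
            have hexp : ∑ j, t j * (a j.castSucc x - (y ⬝ᵥ a j.castSucc) / c * a (Fin.last n) x)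
                = ∑ j, t j * a j.castSucc x
                  - (∑ j, t j * ((y ⬝ᵥ a j.castSucc) / c)) * a (Fin.last n) x := by
              rw [Finset.sum_mul, ← Finset.sum_sub_distrib]
              exact Finset.sum_congr rfl fun j _ => by ring
            rw [hexp] at h
            rw [hμ]; linarith
        · right
          set r : ℚ := (w ⬝ᵥ a (Fin.last n)) / c with hr
          have hexpand : ∀ (v u : Fin m → ℚ) (s : ℚ),
              (w ⬝ᵥ fun x => v x - s * u x) = w ⬝ᵥ v - s * (w ⬝ᵥ u) := fun v u s => by
            simp only [dotProduct, Finset.mul_sum, ← Finset.sum_sub_distrib]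
            exact Finset.sum_congr rfl fun x _ => by ring
          have hdot : ∀ v : Fin m → ℚ,
              (fun x => w x - r * y x) ⬝ᵥ v = w ⬝ᵥ v - r * (y ⬝ᵥ v) := fun v => by
            simp only [dotProduct, Finset.mul_sum, ← Finset.sum_sub_distrib]
            exact Finset.sum_congr rfl fun x _ => by ring
          refine ⟨fun x => w x - r * y x, fun i => ?_, ?_⟩
          · induction i using Fin.lastCases with
            | last =>
              rw [hdot]
              have hkey : r * (y ⬝ᵥ a (Fin.last n)) = w ⬝ᵥ a (Fin.last n) := by
                rw [hr, ← hc, div_mul_cancel₀ _ hcne]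
              linarith
            | cast j =>
              rw [hdot]
              have := hw j
              rw [hexpand] at this
              have hre : r * (y ⬝ᵥ a j.castSucc)
                  = (y ⬝ᵥ a j.castSucc) / c * (w ⬝ᵥ a (Fin.last n)) := by
                rw [hr]; ring
              linarith
          · rw [hdot]
            have := hwb
            rw [hexpand] at this
            have hre : r * (y ⬝ᵥ b) = (y ⬝ᵥ b) / c * (w ⬝ᵥ a (Fin.last n)) := by
              rw [hr]; ring
            linarith

/-- Farkas' lemma: there exists `t ≥ 0` with `A t = b` iff for every `y`
with `yᵀA ≥ 0` we have `yᵀb ≥ 0`. -/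
theorem farkas_lemma (m n : ℕ) (A : Matrix (Fin m) (Fin n) ℚ) (b : Fin m → ℚ) :
    (∃ t : Fin n → ℚ, 0 ≤ t ∧ A.mulVec t = b) ↔
      ∀ y : Fin m → ℚ, 0 ≤ Matrix.vecMul y A → 0 ≤ y ⬝ᵥ b := by
  constructor
  · rintro ⟨t, ht, hAt⟩ y hyA
    have : y ⬝ᵥ b = ∑ j, t j * (vecMul y A j) := by
      rw [← hAt, dotProduct_mulVec, dotProduct_comm]
      simp [dotProduct, mul_comm]
    rw [this]
    exact Finset.sum_nonneg fun j _ => mul_nonneg (ht j) (hyA j)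
  · intro h
    rcases farkas_aux n (fun j x => A x j) b with ⟨t, ht, hsum⟩ | ⟨y, hy, hyb⟩
    · refine ⟨t, fun j => ht j, funext fun x => ?_⟩
      rw [mulVec, ← hsum x]
      simp [dotProduct, mul_comm]
    · exfalso
      have hA : 0 ≤ vecMul y A := fun j => by
        simpa [vecMul, dotProduct] using hy j
      exact absurd (h y hA) (not_le.mpr hyb)
end

section
/- Let c ∈ Q^n, c0 ∈ Q, A ∈ Q^{m×n}, b ∈ Q^m, and assume the polyhedron P = {x ∈ Q^n | A x ≤ b} is nonempty. The inequality cᵀx ≤ c0 holds for all x ∈ P (i.e., is redundant w.r.t. A x ≤ b) if and only if there exist a vector t ≥ 0 in Q^m and a scalar λ ≥ 0 such that cᵀ = tᵀA and c0 = tᵀb + λ. -/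
/-!
Farkas' lemma for a finite system of linear functionals on an arbitrary vector space over an
ordered field, proved by Bartl's induction on the number of constraints: if `c` is not already a
consequence of all but one constraint `a j`, a witness `y` with `c y < 0` has `a j y < 0`, and
projecting every functional onto `ker (a j)` along `y` removes `a j` from the system.
The affine version follows by homogenization: a valid inequality `c x ≤ c0` on the nonempty
polyhedron `{x | a x ≤ b}` gives the valid homogeneous inequality `c x ≤ c0 s` on the cone
`{(x, s) | 0 ≤ s, a x ≤ s b}`, whose points with `s = 0` are recession directions.
-/

open Matrix

lemma Finset.sum_insert_update_smul {R M ι : Type*} [Semiring R] [AddCommMonoid M] [Module R M]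
    [DecidableEq ι] {s : Finset ι} {j : ι} (hj : j ∉ s) (t : ι → R) (v : R) (f : ι → M) :
    ∑ i ∈ insert j s, Function.update t j v i • f i = v • f j + ∑ i ∈ s, t i • f i := by
  rw [Finset.sum_insert hj, Function.update_self]
  congr 1
  exact Finset.sum_congr rfl fun i hi => by rw [Function.update_of_ne (ne_of_mem_of_not_mem hi hj)]

section Farkas

variable {𝕜 V ι : Type*} [Field 𝕜] [LinearOrder 𝕜] [IsStrictOrderedRing 𝕜]
  [AddCommGroup V] [Module 𝕜 V]

lemma Module.Dual.eq_zero_of_forall_nonneg {c : Module.Dual 𝕜 V} (h : ∀ x, 0 ≤ c x) : c = 0 :=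
  LinearMap.ext fun x => le_antisymm (by simpa using h (-x)) (h x)

theorem Module.Dual.exists_nonneg_eq_sum_of_forall_nonneg (s : Finset ι)
    (a : ι → Module.Dual 𝕜 V) (c : Module.Dual 𝕜 V) (h : ∀ x, (∀ i ∈ s, 0 ≤ a i x) → 0 ≤ c x) :
    ∃ t : ι → 𝕜, 0 ≤ t ∧ c = ∑ i ∈ s, t i • a i := by
  classical
  induction s using Finset.induction_on generalizing a c with
  | empty =>
    exact ⟨0, le_rfl, by simpa using eq_zero_of_forall_nonneg fun x => h x (by simp)⟩
  | insert j s hj ih =>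
    by_cases hs : ∀ x, (∀ i ∈ s, 0 ≤ a i x) → 0 ≤ c x
    · obtain ⟨t, ht, rfl⟩ := ih a c hs
      refine ⟨Function.update t j 0, le_update_iff.2 ⟨le_rfl, fun i _ => ht i⟩, ?_⟩
      rw [Finset.sum_insert_update_smul hj, zero_smul, zero_add]
    · push Not at hs
      obtain ⟨y, hys, hcy⟩ := hs
      have hjy : a j y < 0 := by
        by_contra! hjy
        exact (h y (Finset.forall_mem_insert .. |>.2 ⟨hjy, hys⟩)).not_gt hcy
      have hproj : ∀ x (f : Module.Dual 𝕜 V),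
          f (x - (a j x / a j y) • y) = (f - (f y / a j y) • a j) x := by
        intro x f
        simp only [map_sub, map_smul, smul_eq_mul, LinearMap.sub_apply, LinearMap.smul_apply]
        ring
      have hvalid : ∀ x, (∀ i ∈ s, 0 ≤ (a i - (a i y / a j y) • a j) x) →
          0 ≤ (c - (c y / a j y) • a j) x := by
        intro x hx
        rw [← hproj]
        refine h _ (Finset.forall_mem_insert .. |>.2 ⟨?_, fun i hi => hproj x (a i) ▸ hx i hi⟩)
        rw [hproj, LinearMap.sub_apply, LinearMap.smul_apply, smul_eq_mul, div_self hjy.ne,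
          one_mul, sub_self]
      obtain ⟨t, ht, hc⟩ := ih _ _ hvalid
      have hty : 0 ≤ ∑ i ∈ s, t i * a i y :=
        Finset.sum_nonneg fun i hi => mul_nonneg (ht i) (hys i hi)
      refine ⟨Function.update t j ((c y - ∑ i ∈ s, t i * a i y) / a j y),
        le_update_iff.2 ⟨div_nonneg_of_nonpos (by linarith) hjy.le, fun i _ => ht i⟩, ?_⟩
      rw [Finset.sum_insert_update_smul hj]
      ext x
      have hcx := LinearMap.congr_fun hc x
      simp only [LinearMap.sub_apply, LinearMap.smul_apply, LinearMap.sum_apply, smul_eq_mul,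
        mul_sub, Finset.sum_sub_distrib, ← mul_assoc, ← mul_div_assoc, LinearMap.add_apply]
        at hcx ⊢
      rw [← Finset.sum_mul, ← Finset.sum_div] at hcx
      linear_combination hcx

lemma nonpos_of_forall_add_mul_le {p q r : 𝕜} (h : ∀ l : 𝕜, 0 ≤ l → p + l * q ≤ r) : q ≤ 0 := by
  by_contra! hq
  have hpr : p ≤ r := by simpa using h 0 le_rfl
  have := h ((r - p + 1) / q) (div_nonneg (by linarith) hq.le)
  rw [div_mul_cancel₀ _ hq.ne'] at this
  linarith

lemma Module.Dual.le_mul_of_forall_le {a : ι → Module.Dual 𝕜 V} {b : ι → 𝕜}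
    {c : Module.Dual 𝕜 V} {c0 : 𝕜} (hne : ∃ x₀, ∀ i, a i x₀ ≤ b i)
    (h : ∀ x, (∀ i, a i x ≤ b i) → c x ≤ c0) {x : V} {s : 𝕜} (hs : 0 ≤ s)
    (hx : ∀ i, a i x ≤ b i * s) : c x ≤ c0 * s := by
  rcases hs.eq_or_lt with rfl | hs
  · obtain ⟨x₀, hx₀⟩ := hne
    simp only [mul_zero] at hx ⊢
    refine nonpos_of_forall_add_mul_le (p := c x₀) (r := c0) fun l hl => ?_
    simpa using h (x₀ + l • x) fun i => by
      simpa using add_le_of_le_of_nonpos (hx₀ i) (mul_nonpos_of_nonneg_of_nonpos hl (hx i))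
  · have := h (s⁻¹ • x) fun i => by
      rw [map_smul, smul_eq_mul, inv_mul_le_iff₀ hs, mul_comm]
      exact hx i
    rwa [map_smul, smul_eq_mul, inv_mul_le_iff₀ hs, mul_comm] at this

theorem Module.Dual.forall_le_iff_exists_nonneg_eq_sum [Fintype ι] (a : ι → Module.Dual 𝕜 V)
    (b : ι → 𝕜) (c : Module.Dual 𝕜 V) (c0 : 𝕜) (hne : ∃ x₀, ∀ i, a i x₀ ≤ b i) :
    (∀ x, (∀ i, a i x ≤ b i) → c x ≤ c0) ↔
      ∃ t : ι → 𝕜, 0 ≤ t ∧ c = ∑ i, t i • a i ∧ ∑ i, t i * b i ≤ c0 := by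
  constructor
  · intro h
    let a' : Option ι → Module.Dual 𝕜 (V × 𝕜) := fun o => o.elim (LinearMap.snd 𝕜 V 𝕜)
      fun i => b i • LinearMap.snd 𝕜 V 𝕜 - a i ∘ₗ LinearMap.fst 𝕜 V 𝕜
    obtain ⟨t, ht, hc⟩ := exists_nonneg_eq_sum_of_forall_nonneg Finset.univ a'
      (c0 • LinearMap.snd 𝕜 V 𝕜 - c ∘ₗ LinearMap.fst 𝕜 V 𝕜) fun ⟨x, s⟩ hxs => by
        have := le_mul_of_forall_le hne h (by simpa [a'] using hxs none (Finset.mem_univ _))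
          fun i => by simpa [a'] using hxs (some i) (Finset.mem_univ _)
        simpa using this
    refine ⟨t ∘ some, fun i => ht _, ?_, ?_⟩
    · ext x
      simpa [a', Fintype.sum_option] using LinearMap.congr_fun hc (x, 0)
    · have hc0 := LinearMap.congr_fun hc (0, 1)
      simp [a', Fintype.sum_option] at hc0
      rw [hc0]
      exact le_add_of_nonneg_left (ht none)
  · rintro ⟨t, ht, rfl, htb⟩ x hx
    calc (∑ i, t i • a i) x = ∑ i, t i * a i x := by simp
      _ ≤ ∑ i, t i * b i := Finset.sum_le_sum fun i _ => mul_le_mul_of_nonneg_left (hx i) (ht i)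
      _ ≤ c0 := htb

end Farkas

/-- Redundancy test criterion: assuming `P = {x | A x ≤ b}` is nonempty,
the inequality `cᵀx ≤ c0` holds on all of `P` iff there exist `t ≥ 0` and
`λ ≥ 0` with `cᵀ = tᵀA` and `c0 = tᵀb + λ`. -/
theorem redundancy_test_criterion (m n : ℕ) (A : Matrix (Fin m) (Fin n) ℚ)
    (b : Fin m → ℚ) (c : Fin n → ℚ) (c0 : ℚ)
    (hne : ∃ x : Fin n → ℚ, A.mulVec x ≤ b) :
    (∀ x : Fin n → ℚ, A.mulVec x ≤ b → c ⬝ᵥ x ≤ c0) ↔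
      ∃ (t : Fin m → ℚ) (lam : ℚ), 0 ≤ t ∧ 0 ≤ lam ∧
        Matrix.vecMul t A = c ∧ c0 = t ⬝ᵥ b + lam := by
  have hcone (t : Fin m → ℚ) :
      dotProductEquiv ℚ (Fin n) c = ∑ i, t i • dotProductEquiv ℚ (Fin n) (A i) ↔ t ᵥ* A = c := by
    rw [vecMul_eq_sum, ← (dotProductEquiv ℚ (Fin n)).injective.eq_iff, map_sum]
    simp only [map_smul]
    exact eq_comm
  have hfarkas := Module.Dual.forall_le_iff_exists_nonneg_eq_sum
    (fun i => dotProductEquiv ℚ (Fin n) (A i)) b (dotProductEquiv ℚ (Fin n) c) c0 hne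
  simp only [dotProductEquiv_apply_apply, hcone] at hfarkas
  refine hfarkas.trans ⟨fun ⟨t, ht, htA, htb⟩ => ⟨t, c0 - t ⬝ᵥ b, ht, sub_nonneg.2 htb, htA, by ring⟩,
    fun ⟨t, lam, ht, hlam, htA, hc0⟩ => ⟨t, ht, htA, ?_⟩⟩
  change t ⬝ᵥ b ≤ c0
  linarith
end

section
/- A convex cone C ⊆ Q^n is polyhedral (an intersection of finitely many half-spaces {x | aᵢᵀx ≤ 0}) if and only if it is finitely generated (equal to the set of nonnegative linear combinations of finitely many vectors). -/
/-!
Projections of polyhedral cones are polyhedral, by Fourier–Motzkin elimination: eliminating one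
variable `t` from `r + t • d ≤ 0` leaves the constraints with `d i = 0` together with the
combinations of pairs of constraints in which `t` has opposite signs. The cone spanned by `v` is
the projection of the polyhedral cone `{(x, λ) | 0 ≤ λ, x = ∑ i, λ i • v i}`, so finitely
generated cones are polyhedral.

Conversely, let `C = {x | A x ≤ 0}`. The cone spanned by the rows of `A` is finitely generated,
hence of the form `{y | B y ≤ 0}`, and polarity shows that `C` is the cone spanned by the rows
of `B`.
-/

open Matrix

theorem exists_forall_le_and_forall_le {α β γ : Type*} [LinearOrder α] [Nonempty α]
    [Finite β] [Finite γ] (lo : β → α) (hi : γ → α) (h : ∀ b c, lo b ≤ hi c) :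
    ∃ t, (∀ b, lo b ≤ t) ∧ ∀ c, t ≤ hi c := by
  cases isEmpty_or_nonempty β with
  | inr =>
    obtain ⟨b₀, hb₀⟩ := Finite.exists_max lo
    exact ⟨lo b₀, hb₀, h b₀⟩
  | inl =>
    cases isEmpty_or_nonempty γ with
    | inr =>
      obtain ⟨c₀, hc₀⟩ := Finite.exists_min hi
      exact ⟨hi c₀, fun b => isEmptyElim b, hc₀⟩
    | inl => exact ⟨Classical.arbitrary α, fun b => isEmptyElim b, fun c => isEmptyElim c⟩

section

variable {𝕜 : Type*} [Field 𝕜] [LinearOrder 𝕜] {ι : Type*}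

def nonnegSpan {κ : Type*} [Fintype κ] (v : κ → ι → 𝕜) : Set (ι → 𝕜) :=
  {x | ∃ lam : κ → 𝕜, 0 ≤ lam ∧ x = ∑ i, lam i • v i}

variable [Fintype ι]

def IsPolyhedral (S : Set (ι → 𝕜)) : Prop :=
  ∃ (m : ℕ) (A : Matrix (Fin m) ι 𝕜), S = {x | A *ᵥ x ≤ 0}

def IsFinitelyGenerated (S : Set (ι → 𝕜)) : Prop :=
  ∃ (k : ℕ) (v : Fin k → ι → 𝕜), S = nonnegSpan v

theorem isPolyhedral_setOf_mulVec_nonpos {κ : Type*} [Fintype κ] (A : Matrix κ ι 𝕜) :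
    IsPolyhedral {x | A *ᵥ x ≤ 0} := by
  let e := Fintype.equivFin κ
  refine ⟨_, A.submatrix e.symm id, ?_⟩
  ext x
  simp only [Set.mem_ofPred_eq, Pi.le_def, Pi.zero_apply]
  exact e.symm.forall_congr_right.symm

theorem IsPolyhedral.preimage_mulVec {κ : Type*} [Fintype κ] {S : Set (κ → 𝕜)}
    (hS : IsPolyhedral S) (B : Matrix κ ι 𝕜) : IsPolyhedral {x | B *ᵥ x ∈ S} := by
  obtain ⟨m, A, rfl⟩ := hS
  exact ⟨m, A * B, by simp [mulVec_mulVec]⟩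

variable [IsStrictOrderedRing 𝕜]

omit [Fintype ι] in
theorem mem_nonnegSpan {κ : Type*} [Fintype κ] (v : κ → ι → 𝕜) (i : κ) : v i ∈ nonnegSpan v := by
  classical
  exact ⟨Pi.single i 1, by simp, by simp⟩

theorem dotProduct_nonpos_of_mem_nonnegSpan {κ : Type*} [Fintype κ] {v : κ → ι → 𝕜}
    {w x : ι → 𝕜} (hx : x ∈ nonnegSpan v) (hw : ∀ i, w ⬝ᵥ v i ≤ 0) : w ⬝ᵥ x ≤ 0 := by
  obtain ⟨lam, hlam, rfl⟩ := hx
  rw [dotProduct_sum]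
  exact Finset.sum_nonpos fun i _ => by
    rw [dotProduct_smul, smul_eq_mul]
    exact mul_nonpos_of_nonneg_of_nonpos (hlam i) (hw i)

theorem isPolyhedral_setOf_exists_add_smul_nonpos (d : ι → 𝕜) :
    IsPolyhedral {r | ∃ t : 𝕜, r + t • d ≤ 0} := by
  classical
  let row : {i // d i = 0} ⊕ ({i // 0 < d i} × {j // d j < 0}) → ι → 𝕜
    | .inl i => Pi.single i 1
    | .inr (i, j) => d i • Pi.single (j : ι) 1 - d j • Pi.single (i : ι) 1
  convert isPolyhedral_setOf_mulVec_nonpos (Matrix.of row) using 1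
  ext r
  have hrow : ∀ a, (Matrix.of row *ᵥ r) a = row a ⬝ᵥ r := fun _ => rfl
  simp only [Set.mem_ofPred_eq, Pi.le_def, Pi.add_apply, Pi.smul_apply, smul_eq_mul,
    Pi.zero_apply, hrow, Sum.forall, Prod.forall, Subtype.forall, row, sub_dotProduct,
    smul_dotProduct, single_dotProduct, one_mul]
  constructor
  · rintro ⟨t, ht⟩
    refine ⟨fun i hi => by simpa [hi] using ht i, fun i hi j hj => ?_⟩
    linarith [mul_nonpos_of_nonneg_of_nonpos hi.le (ht j),
      mul_nonpos_of_nonneg_of_nonpos (neg_pos.2 hj).le (ht i)]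
  · rintro ⟨hzero, hpair⟩
    obtain ⟨t, hlo, hhi⟩ := exists_forall_le_and_forall_le
      (fun j : {j // d j < 0} => -r j / d j) (fun i : {i // 0 < d i} => -r i / d i)
      (fun ⟨j, hj⟩ ⟨i, hi⟩ => by
        rw [← neg_div_neg_eq, neg_neg, div_le_div_iff₀ (neg_pos.2 hj) hi]
        linarith [hpair i hi j hj])
    refine ⟨t, fun i => ?_⟩
    rcases lt_trichotomy (d i) 0 with hneg | hzero' | hpos
    · linarith [(div_le_iff_of_neg hneg).1 (hlo ⟨i, hneg⟩)]
    · simpa [hzero'] using hzero i hzero'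
    · linarith [(le_div_iff₀ hpos).1 (hhi ⟨i, hpos⟩)]

end

section

variable {𝕜 : Type*} [Field 𝕜] [LinearOrder 𝕜] [IsStrictOrderedRing 𝕜] {ι : Type} [Fintype ι]

theorem isPolyhedral_setOf_exists_add_mulVec_nonpos {k : ℕ} (C : Matrix ι (Fin k) 𝕜) :
    IsPolyhedral {r | ∃ μ, r + C *ᵥ μ ≤ 0} := by
  classical
  induction k generalizing ι with
  | zero =>
    convert isPolyhedral_setOf_mulVec_nonpos (1 : Matrix ι ι 𝕜) using 1
    simp [mulVec_empty]
  | succ k ih =>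
    let C' : Matrix ι (Fin k) 𝕜 := of fun i j => C i j.succ
    have hsplit : ∀ t μ, C *ᵥ Fin.cons t μ = t • (fun i => C i 0) + C' *ᵥ μ := by
      intro t μ
      ext i
      simp [mulVec, dotProduct, Fin.sum_univ_succ, C', mul_comm]
    obtain ⟨_, P, hP⟩ := isPolyhedral_setOf_exists_add_smul_nonpos (fun i => C i 0)
    convert (ih (P * C')).preimage_mulVec P using 1
    ext r
    simp only [Set.mem_ofPred_eq, Fin.exists_fin_succ_pi, hsplit]
    rw [exists_comm]
    refine exists_congr fun μ => ?_
    have hPμ := Set.ext_iff.1 hP (r + C' *ᵥ μ)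
    simp only [Set.mem_ofPred_eq] at hPμ
    rw [← mulVec_mulVec, ← mulVec_add, ← hPμ]
    simp only [add_assoc, add_comm (_ • _)]

theorem isPolyhedral_nonnegSpan {k : ℕ} (v : Fin k → ι → 𝕜) : IsPolyhedral (nonnegSpan v) := by
  classical
  let V : Matrix ι (Fin k) 𝕜 := (of v)ᵀ
  have hV : ∀ lam, ∑ i, lam i • v i = V *ᵥ lam := fun lam => by
    rw [mulVec_transpose, vecMul_eq_sum]; rfl
  convert (isPolyhedral_setOf_exists_add_mulVec_nonpos
      (fromRows (-V) (fromRows V (-1 : Matrix (Fin k) (Fin k) 𝕜)))).preimage_mulVec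
    (fromRows (1 : Matrix ι ι 𝕜) (fromRows (-1) (0 : Matrix (Fin k) ι 𝕜))) using 1
  ext x
  simp only [nonnegSpan, Set.mem_ofPred_eq, fromRows_mulVec, ← Sum.elim_add_add, hV,
    ← Sum.elim_zero_zero, Sum.elim_le_elim_iff]
  refine exists_congr fun lam => ?_
  simp only [one_mulVec, neg_mulVec, zero_mulVec, ← sub_eq_add_neg, sub_nonpos,
    neg_add_le_iff_le_add, add_zero, le_antisymm_iff]
  tauto

theorem IsFinitelyGenerated.isPolyhedral {S : Set (ι → 𝕜)} (hS : IsFinitelyGenerated S) :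
    IsPolyhedral S := by
  obtain ⟨k, v, rfl⟩ := hS
  exact isPolyhedral_nonnegSpan v

theorem IsPolyhedral.isFinitelyGenerated {S : Set (ι → 𝕜)} (hS : IsPolyhedral S) :
    IsFinitelyGenerated S := by
  obtain ⟨m, A, rfl⟩ := hS
  obtain ⟨m', B, hB⟩ := isPolyhedral_nonnegSpan A
  obtain ⟨_, W, hW⟩ := isPolyhedral_nonnegSpan B
  have hAB : ∀ i j, A i ⬝ᵥ B j ≤ 0 := fun i j => by
    rw [dotProduct_comm]
    exact (hB ▸ mem_nonnegSpan A i :) j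
  have hWA : ∀ k, W k ∈ nonnegSpan A := fun k => hB ▸ fun j => by
    show B j ⬝ᵥ W k ≤ 0
    rw [dotProduct_comm]
    exact (hW ▸ mem_nonnegSpan B j :) k
  refine ⟨m', B, Set.Subset.antisymm (fun x hx => hW ▸ fun k => ?_) fun x hx i => ?_⟩
  · show W k ⬝ᵥ x ≤ 0
    rw [dotProduct_comm]
    exact dotProduct_nonpos_of_mem_nonnegSpan (hWA k) fun i => by
      rw [dotProduct_comm]
      exact hx i
  · exact dotProduct_nonpos_of_mem_nonnegSpan hx (hAB i)

end

theorem minkowski_weyl_general (n : ℕ) (C : Set (Fin n → ℚ)) :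
    (∃ (m : ℕ) (A : Matrix (Fin m) (Fin n) ℚ), C = {x | A.mulVec x ≤ 0}) ↔
      (∃ (k : ℕ) (v : Fin k → (Fin n → ℚ)),
        C = {x | ∃ lam : Fin k → ℚ, 0 ≤ lam ∧ x = ∑ i, lam i • v i}) :=
  ⟨IsPolyhedral.isFinitelyGenerated, IsFinitelyGenerated.isPolyhedral⟩

/-- Minkowski–Weyl theorem: a convex cone `C ⊆ ℚ^n` is polyhedral iff it is
finitely generated. -/
theorem minkowski_weyl (n : ℕ) (C : Set (Fin n → ℚ))
    (hcone : ∀ x ∈ C, ∀ lam : ℚ, 0 ≤ lam → lam • x ∈ C)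
    (hconvex : ∀ x ∈ C, ∀ y ∈ C, x + y ∈ C) :
    (∃ (m : ℕ) (A : Matrix (Fin m) (Fin n) ℚ), C = {x | A.mulVec x ≤ 0}) ↔
      (∃ (k : ℕ) (v : Fin k → (Fin n → ℚ)),
        C = {x | ∃ lam : Fin k → ℚ, 0 ≤ lam ∧ x = ∑ i, lam i • v i}) :=
  minkowski_weyl_general n C
end

section
/- Let P = {x ∈ Q^n | A x ≤ b} be a pointed polyhedron and let HomCone(P) = {(x, x_last) | A x − b·x_last ≤ 0, x_last ≥ 0}. Every extreme ray of HomCone(P) is (up to positive scaling) either of the form (x, 0) where x is an extreme ray of the characteristic cone of P, or of the form (x, 1) where x is an extreme point (vertex) of P. -/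
open Matrix

/-- The minimal face of the cone `{x | A x ≤ 0}` containing the ray `r`. -/
def minimalFace {m n : ℕ} (A : Matrix (Fin m) (Fin n) ℚ) (r : Fin n → ℚ) :
    Set (Fin n → ℚ) :=
  {x | A.mulVec x ≤ 0 ∧ ∀ i, A.mulVec r i = 0 → A.mulVec x i = 0}

/-- `r` is an extreme ray of the cone `{x | A x ≤ 0}`: it is a nonzero
element of the cone whose minimal face is one-dimensional. -/
def IsExtremeRay {m n : ℕ} (A : Matrix (Fin m) (Fin n) ℚ) (r : Fin n → ℚ) : Prop :=
  r ≠ 0 ∧ A.mulVec r ≤ 0 ∧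
    Module.finrank ℚ (Submodule.span ℚ (minimalFace A r)) = 1

/-- `x` is a vertex (extreme point) of `{y | A y ≤ b}`: a minimal face that
is a single point. -/
def IsVertex {m n : ℕ} (A : Matrix (Fin m) (Fin n) ℚ) (b : Fin m → ℚ)
    (x : Fin n → ℚ) : Prop :=
  A.mulVec x ≤ b ∧
    ∃ I : Set (Fin m), {y | A.mulVec y ≤ b ∧ ∀ i ∈ I, A i ⬝ᵥ y = b i} = {x}

/-- Matrix of the homogenized cone `{(x, x_last) | A x - b x_last ≤ 0, x_last ≥ 0}`. -/
def homMat {m n : ℕ} (A : Matrix (Fin m) (Fin n) ℚ) (b : Fin m → ℚ) :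
    Matrix (Fin (m + 1)) (Fin (n + 1)) ℚ :=
  Matrix.of (Fin.snoc (fun i => Fin.snoc (A i) (-(b i)))
    (Fin.snoc (0 : Fin n → ℚ) (-1)))

lemma hm1 {m n : ℕ} (A : Matrix (Fin m) (Fin n) ℚ) (b : Fin m → ℚ)
    (v : Fin (n+1) → ℚ) (i : Fin m) :
    (homMat A b).mulVec v i.castSucc
      = A.mulVec (Fin.init v) i - b i * v (Fin.last n) := by
  simp [homMat, Matrix.mulVec, dotProduct, Fin.sum_univ_castSucc, Fin.init]
  ring

lemma hm2 {m n : ℕ} (A : Matrix (Fin m) (Fin n) ℚ) (b : Fin m → ℚ)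
    (v : Fin (n+1) → ℚ) :
    (homMat A b).mulVec v (Fin.last m) = - v (Fin.last n) := by
  simp [homMat, Matrix.mulVec, dotProduct, Fin.sum_univ_castSucc]

def snocLin (n : ℕ) : (Fin n → ℚ) →ₗ[ℚ] (Fin (n+1) → ℚ) where
  toFun y := Fin.snoc y 0
  map_add' y z := by
    funext j; refine Fin.lastCases ?_ ?_ j <;> simp
  map_smul' c y := by
    funext j; refine Fin.lastCases ?_ ?_ j <;> simp

lemma snocLin_inj (n : ℕ) : Function.Injective (snocLin n) := by
  intro y z h
  funext i
  have := congrFun h i.castSucc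
  simpa [snocLin] using this

lemma rank_one_mem {N : ℕ} (S : Set (Fin N → ℚ)) (r : Fin N → ℚ) (hrS : r ∈ S)
    (hr0 : r ≠ 0) (h1 : Module.finrank ℚ (Submodule.span ℚ S) = 1) :
    ∀ y ∈ S, ∃ c : ℚ, y = c • r := by
  intro y hy
  have hle : Submodule.span ℚ {r} ≤ Submodule.span ℚ S :=
    Submodule.span_mono (by simpa using hrS)
  have h1' : Module.finrank ℚ (Submodule.span ℚ ({r} : Set (Fin N → ℚ))) = 1 :=
    finrank_span_singleton hr0
  have := Submodule.eq_of_le_of_finrank_le hle (by rw [h1, h1'])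
  have hyy : y ∈ Submodule.span ℚ ({r} : Set (Fin N → ℚ)) := by
    rw [this]; exact Submodule.subset_span hy
  obtain ⟨c, hc⟩ := Submodule.mem_span_singleton.mp hyy
  exact ⟨c, hc.symm⟩

/-- Extreme rays of the homogenized cone of a pointed polyhedron: each is, up
to positive scaling, either `(x, 0)` with `x` an extreme ray of the
characteristic cone, or `(x, 1)` with `x` a vertex of `P`. -/
theorem extreme_rays_of_homCone (m n : ℕ) (A : Matrix (Fin m) (Fin n) ℚ)
    (b : Fin m → ℚ) (hpointed : A.rank = n) (r : Fin (n + 1) → ℚ)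
    (hr : IsExtremeRay (homMat A b) r) :
    ∃ lam : ℚ, 0 < lam ∧
      ((∃ x : Fin n → ℚ, IsExtremeRay A x ∧ lam • r = Fin.snoc x 0) ∨
       (∃ x : Fin n → ℚ, IsVertex A b x ∧ lam • r = Fin.snoc x 1)) := by
  obtain ⟨hr0, hrc, hrf⟩ := hr
  have hlast_nonneg : 0 ≤ r (Fin.last n) := by
    have := hrc (Fin.last m)
    rw [hm2] at this
    simpa using this
  rcases eq_or_lt_of_le hlast_nonneg with h0 | hpos
  · -- r_last = 0 : extreme ray of characteristic cone
    have h0 : r (Fin.last n) = 0 := h0.symm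
    set x : Fin n → ℚ := Fin.init r with hx
    have hrx : r = Fin.snoc x 0 := by
      rw [hx, ← h0, Fin.snoc_init_self]
    refine ⟨1, one_pos, Or.inl ⟨x, ?_, by rw [one_smul, hrx]⟩⟩
    have hx0 : x ≠ 0 := by
      intro h
      apply hr0
      rw [hrx, h]
      funext j
      refine Fin.lastCases ?_ ?_ j <;> simp
    have hxc : A.mulVec x ≤ 0 := by
      intro i
      have := hrc i.castSucc
      rw [hm1, h0] at this
      simpa using this
    refine ⟨hx0, hxc, ?_⟩
    -- minimal face correspondence
    have hset : minimalFace (homMat A b) r = (snocLin n) '' (minimalFace A x) := by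
      ext v
      constructor
      · rintro ⟨hv1, hv2⟩
        have hvl : v (Fin.last n) = 0 := by
          have h1 : (homMat A b).mulVec r (Fin.last m) = 0 := by
            rw [hm2, h0, neg_zero]
          have := hv2 (Fin.last m) h1
          rw [hm2] at this
          linarith
        refine ⟨Fin.init v, ⟨?_, ?_⟩, ?_⟩
        · intro i
          have := hv1 i.castSucc
          rw [hm1, hvl] at this
          simpa using this
        · intro i hi
          have hri : (homMat A b).mulVec r i.castSucc = 0 := by
            rw [hm1, h0]
            simpa using hi
          have := hv2 i.castSucc hri
          rw [hm1, hvl] at this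
          simpa using this
        · show Fin.snoc (Fin.init v) 0 = v
          rw [← hvl, Fin.snoc_init_self]
      · rintro ⟨y, ⟨hy1, hy2⟩, rfl⟩
        have hinit : Fin.init ((snocLin n) y) = y := by
          funext i; simp [snocLin, Fin.init]
        have hlasty : (snocLin n) y (Fin.last n) = 0 := by simp [snocLin]
        constructor
        · intro j
          refine Fin.lastCases ?_ ?_ j
          · rw [hm2, hlasty]; simp
          · intro i
            rw [hm1, hinit, hlasty]
            have := hy1 i
            simp only [mul_zero, sub_zero]
            simpa using this
        · intro j
          refine Fin.lastCases ?_ ?_ j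
          · intro _
            rw [hm2, hlasty, neg_zero]
          · intro i hi
            rw [hm1, h0] at hi
            simp only [mul_zero, sub_zero] at hi
            rw [hm1, hinit, hlasty]
            simp only [mul_zero, sub_zero]
            exact hy2 i hi
    have hmap : Submodule.span ℚ (minimalFace (homMat A b) r)
        = (Submodule.span ℚ (minimalFace A x)).map (snocLin n) := by
      rw [hset, Submodule.span_image]
    have := (Submodule.equivMapOfInjective (snocLin n) (snocLin_inj n)
      (Submodule.span ℚ (minimalFace A x))).finrank_eq
    rw [this, ← hmap]
    exact hrf
  · -- r_last > 0 : vertex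
    set t := r (Fin.last n) with ht
    refine ⟨1 / t, by positivity, Or.inr ?_⟩
    set x : Fin n → ℚ := Fin.init ((1/t) • r) with hx
    have hl : ((1/t) • r) (Fin.last n) = 1 := by
      simp [← ht]
      field_simp
    have hsnoc : (1/t) • r = Fin.snoc x 1 := by
      have h2 : Fin.snoc x (((1/t) • r) (Fin.last n)) = (1/t) • r := by
        rw [hx]; exact Fin.snoc_init_self _
      rw [hl] at h2
      exact h2.symm
    have hinit_smul : Fin.init ((1/t) • r) = (1/t) • Fin.init r := by
      funext j; simp [Fin.init]
    have hAx : ∀ i, A.mulVec x i = (1/t) * A.mulVec (Fin.init r) i := by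
      intro i
      rw [hx, hinit_smul, Matrix.mulVec_smul]
      simp
    have hineq : ∀ i, A.mulVec (Fin.init r) i ≤ b i * t := by
      intro i
      have := hrc i.castSucc
      rw [hm1] at this
      simp only [Pi.zero_apply] at this
      rw [← ht] at this
      linarith
    have hxb : ∀ i, A.mulVec x i ≤ b i := by
      intro i
      rw [hAx i, div_mul_eq_mul_div, one_mul, div_le_iff₀ hpos]
      exact hineq i
    refine ⟨x, ⟨?_, ?_⟩, hsnoc⟩
    · exact hxb
    · -- the tight set pins down x
      refine ⟨{i | (homMat A b).mulVec r i.castSucc = 0}, ?_⟩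
      have hrmem : r ∈ minimalFace (homMat A b) r := ⟨hrc, fun _ h => h⟩
      have key := rank_one_mem _ r hrmem hr0 hrf
      ext y
      simp only [Set.mem_setOf_eq, Set.mem_singleton_iff]
      constructor
      · rintro ⟨hy1, hy2⟩
        have hymem : Fin.snoc y 1 ∈ minimalFace (homMat A b) r := by
          constructor
          · intro j
            refine Fin.lastCases ?_ ?_ j
            · rw [hm2]; simp
            · intro i
              rw [hm1, Fin.init_snoc, Fin.snoc_last]
              have := hy1 i
              simp only [mul_one]
              simpa [Matrix.mulVec] using sub_nonpos.mpr this
          · intro j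
            refine Fin.lastCases ?_ ?_ j
            · intro h
              rw [hm2, ← ht] at h
              linarith
            · intro i hi
              rw [hm1, Fin.init_snoc, Fin.snoc_last]
              have := hy2 i hi
              simp [Matrix.mulVec] at this ⊢
              simp [this]
        obtain ⟨c, hc⟩ := key _ hymem
        have hcl : (1 : ℚ) = c * t := by
          have := congrFun hc (Fin.last n)
          simpa [← ht] using this
        have hc1 : c = 1/t := by
          field_simp
          linarith
        funext i
        have := congrFun hc i.castSucc
        rw [Fin.snoc_castSucc] at this
        rw [this, hc1, hx]
        simp [Fin.init]
      · rintro rfl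
        constructor
        · exact hxb
        · intro i hi
          rw [hm1, ← ht] at hi
          have heq : A.mulVec (Fin.init r) i = b i * t := by linarith
          have : A.mulVec x i = b i := by
            rw [hAx i, heq]
            field_simp
          simpa [Matrix.mulVec] using this
end

section
/- Let C = {x ∈ Q^n | A x ≤ 0} be a pointed polyhedral cone and r ∈ C a nonzero ray. Then r is an extreme ray of C if and only if for every ray r' ∈ C with ζ(r) ⊆ ζ(r'), the vector r' is a nonnegative scalar multiple of r. -/
open Matrix

/-! A nonzero ray `r` of the face lies in it, so the span of the face is one-dimensional exactly
when the face lies on the line `ℚ ∙ r`. Pointedness (`ker A = 0`) then forces the coefficient of a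
ray of the cone on that line to be nonnegative: if `c < 0` then both `A r ≤ 0` and `c • A r ≤ 0`,
so `A r = 0` and `r = 0`. -/

theorem Matrix.mulVec_injective_of_rank_eq_card {m n K : Type*} [Fintype n] [Field K]
    (A : Matrix m n K) (hA : A.rank = Fintype.card n) : Function.Injective A.mulVec := by
  have h := LinearMap.finrank_range_add_finrank_ker A.mulVecLin
  rw [← Matrix.rank, hA, Module.finrank_fintype_fun_eq_card, add_eq_left,
    Submodule.finrank_eq_zero] at h
  exact LinearMap.ker_eq_bot.mp h

theorem Submodule.finrank_span_eq_one_iff_subset_span_singleton {K V : Type*} [DivisionRing K]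
    [AddCommGroup V] [Module K V] {s : Set V} {v : V} (hvs : v ∈ s) (hv : v ≠ 0) :
    Module.finrank K (span K s) = 1 ↔ s ⊆ K ∙ v := by
  have hle : K ∙ v ≤ span K s := span_le.mpr (Set.singleton_subset_iff.mpr (subset_span hvs))
  constructor
  · intro hs
    have : FiniteDimensional K (span K s) := Module.finite_of_finrank_eq_succ hs
    rw [eq_of_le_of_finrank_le hle (by rw [hs, finrank_span_singleton hv])]
    exact subset_span
  · intro hsub
    rw [le_antisymm (span_le.mpr hsub) hle, finrank_span_singleton hv]

theorem nonneg_of_smul_mem_pointed_cone {m n R : Type*} [Fintype n] [Field R] [LinearOrder R]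
    [IsStrictOrderedRing R] {A : Matrix m n R} (hA : Function.Injective A.mulVec)
    {r : n → R} (hr : A *ᵥ r ≤ 0) (hr0 : r ≠ 0) {c : R} (hc : A *ᵥ (c • r) ≤ 0) : 0 ≤ c := by
  by_contra! hneg
  have hAr : A *ᵥ r = 0 := by
    funext i
    have hci : c * (A *ᵥ r) i ≤ 0 := by simpa [mulVec_smul] using hc i
    exact le_antisymm (hr i) (nonneg_of_mul_nonpos_right hci hneg)
  exact hr0 (hA (by rw [hAr, mulVec_zero]))

/-- Combinatorial test for extreme rays: a nonzero ray `r` of the pointed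
cone `{x | A x ≤ 0}` is extreme iff every ray `r'` of the cone with
`ζ(r) ⊆ ζ(r')` is a nonnegative multiple of `r`. -/
theorem combinatorial_test_extreme_ray (m n : ℕ) (A : Matrix (Fin m) (Fin n) ℚ)
    (hpointed : A.rank = n) (r : Fin n → ℚ) (hrC : A.mulVec r ≤ 0) (hr0 : r ≠ 0) :
    IsExtremeRay A r ↔
      ∀ r' : Fin n → ℚ, A.mulVec r' ≤ 0 →
        (∀ i, A.mulVec r i = 0 → A.mulVec r' i = 0) →
          ∃ lam : ℚ, 0 ≤ lam ∧ r' = lam • r := by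
  have hA : Function.Injective A.mulVec :=
    A.mulVec_injective_of_rank_eq_card (by rw [hpointed, Fintype.card_fin])
  have hrF : r ∈ minimalFace A r := ⟨hrC, fun _ h => h⟩
  rw [IsExtremeRay, Submodule.finrank_span_eq_one_iff_subset_span_singleton hrF hr0,
    and_iff_right hr0, and_iff_right hrC]
  constructor
  · intro hsub r' hr'C hr'z
    obtain ⟨c, rfl⟩ := Submodule.mem_span_singleton.mp (hsub ⟨hr'C, hr'z⟩)
    exact ⟨c, nonneg_of_smul_mem_pointed_cone hA hrC hr0 hr'C, rfl⟩
  · rintro h x ⟨hxC, hxz⟩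
    obtain ⟨c, -, rfl⟩ := h x hxC hxz
    exact Submodule.smul_mem _ c (Submodule.mem_span_singleton_self r)
end

section
/- Let C = {x ∈ Q^n | A x ≤ 0} be a pointed polyhedral cone and let r, r' be two distinct (non-proportional) extreme rays of C. Then r and r' span a 2-dimensional face of C (i.e., they are adjacent) if and only if rank(A_{ζ(r) ∩ ζ(r')}) = n − 2. -/
/-!
Let `B` be the submatrix of rows in `ζ(r) ∩ ζ(r')`, so that `span {r, r'} ≤ ker B`. The point
`r + r'` has zero set exactly `ζ(r) ∩ ζ(r')`, so it lies in the relative interior of the face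
this index set cuts out: for every `x ∈ ker B`, `t • (r + r') + x` stays in any face containing
`r` and `r'` once `t` is large. Hence `ker B` is contained in the linear span of every face
through `r` and `r'`, and equals the span of the face cut out by `ζ(r) ∩ ζ(r')`. By
rank–nullity, a two-dimensional such face exists iff `ker B = span {r, r'}`, i.e. iff
`rank B = n - 2`; since `r, r'` are independent, `dim ker B ≥ 2` and the truncated subtraction
in `n - 2` does no harm.
-/

open Matrix

open Filter

theorem Matrix.mem_ker_mulVecLin_submatrix_val {ι σ R : Type*} [Fintype σ] [CommSemiring R]
    {p : ι → Prop} {A : Matrix ι σ R} {x : σ → R} :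
    x ∈ LinearMap.ker (A.submatrix (Subtype.val : Subtype p → ι) id).mulVecLin ↔
      ∀ i, p i → (A *ᵥ x) i = 0 := by
  simp [funext_iff, mulVec, dotProduct]

theorem Matrix.rank_add_finrank_ker {ι σ 𝕜 : Type*} [Fintype σ] [Field 𝕜] (B : Matrix ι σ 𝕜) :
    B.rank + Module.finrank 𝕜 (LinearMap.ker B.mulVecLin) = Fintype.card σ := by
  have := LinearMap.finrank_range_add_finrank_ker B.mulVecLin
  rwa [Module.finrank_fintype_fun_eq_card] at this

section ConeFace

variable {ι σ 𝕜 : Type*} [Fintype σ] [Field 𝕜] [LinearOrder 𝕜] (A : Matrix ι σ 𝕜)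

def coneFace (I : Set ι) : Set (σ → 𝕜) :=
  {x | A *ᵥ x ≤ 0 ∧ ∀ i ∈ I, (A *ᵥ x) i = 0}

variable {A}

theorem span_coneFace_le_ker_submatrix {p : ι → Prop} :
    Submodule.span 𝕜 (coneFace A {i | p i}) ≤
      LinearMap.ker (A.submatrix (Subtype.val : Subtype p → ι) id).mulVecLin :=
  Submodule.span_le.2 fun _ hx => mem_ker_mulVecLin_submatrix_val.2 hx.2

variable [IsStrictOrderedRing 𝕜] {I : Set ι} {x y : σ → 𝕜}

theorem add_mem_coneFace (hx : x ∈ coneFace A I) (hy : y ∈ coneFace A I) :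
    x + y ∈ coneFace A I := by
  refine ⟨fun i => ?_, fun i hi => ?_⟩
  · simpa [mulVec_add] using add_nonpos (hx.1 i) (hy.1 i)
  · simp [mulVec_add, hx.2 i hi, hy.2 i hi]

theorem exists_smul_add_mem_coneFace [Finite ι] (hy : y ∈ coneFace A I)
    (hx : ∀ i, (A *ᵥ y) i = 0 → (A *ᵥ x) i = 0) : ∃ t : 𝕜, t • y + x ∈ coneFace A I := by
  have hlarge : ∀ i, ∀ᶠ t in atTop, t * (A *ᵥ y) i + (A *ᵥ x) i ≤ 0 := by
    intro i
    rcases (hy.1 i).lt_or_eq with hneg | hzero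
    · filter_upwards [eventually_ge_atTop ((A *ᵥ x) i / -(A *ᵥ y) i)] with t ht
      rw [div_le_iff₀ (neg_pos.2 hneg)] at ht
      linarith
    · exact .of_forall fun t => by simp [hzero, hx i hzero]
  obtain ⟨t, ht⟩ := (eventually_all.2 hlarge).exists
  refine ⟨t, fun i => ?_, fun i hi => ?_⟩
  · simpa [mulVec_add, mulVec_smul] using ht i
  · simp [mulVec_add, mulVec_smul, hy.2 i hi, hx i (hy.2 i hi)]

theorem mem_span_coneFace [Finite ι] (hy : y ∈ coneFace A I)
    (hx : ∀ i, (A *ᵥ y) i = 0 → (A *ᵥ x) i = 0) : x ∈ Submodule.span 𝕜 (coneFace A I) := by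
  obtain ⟨t, ht⟩ := exists_smul_add_mem_coneFace hy hx
  have hy_span := Submodule.smul_mem _ t (Submodule.subset_span hy)
  simpa using Submodule.sub_mem _ (Submodule.subset_span ht) hy_span

theorem ker_submatrix_le_span_coneFace [Finite ι] {r r' : σ → 𝕜} (hr : r ∈ coneFace A I)
    (hr' : r' ∈ coneFace A I) :
    LinearMap.ker (A.submatrix
        (Subtype.val : {i // (A *ᵥ r) i = 0 ∧ (A *ᵥ r') i = 0} → ι) id).mulVecLin ≤
      Submodule.span 𝕜 (coneFace A I) := by
  intro x hx
  refine mem_span_coneFace (add_mem_coneFace hr hr') fun i hi => ?_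
  have hsum : (A *ᵥ r) i + (A *ᵥ r') i = 0 := by simpa [mulVec_add] using hi
  have hr0 : (A *ᵥ r) i ≤ 0 := hr.1 i
  have hr'0 : (A *ᵥ r') i ≤ 0 := hr'.1 i
  have hri : (A *ᵥ r) i = 0 := by linarith
  exact mem_ker_mulVecLin_submatrix_val.1 hx i ⟨hri, by simpa [mulVec_add, hri] using hi⟩

end ConeFace

theorem adjacency_test_general (m n : ℕ) (A : Matrix (Fin m) (Fin n) ℚ)
    (r r' : Fin n → ℚ)
    (hr : IsExtremeRay A r) (hr' : IsExtremeRay A r')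
    (hnp : ∀ lam : ℚ, r' ≠ lam • r) :
    (∃ I : Set (Fin m),
        r ∈ {x | A.mulVec x ≤ 0 ∧ ∀ i ∈ I, A.mulVec x i = 0} ∧
        r' ∈ {x | A.mulVec x ≤ 0 ∧ ∀ i ∈ I, A.mulVec x i = 0} ∧
        Module.finrank ℚ (Submodule.span ℚ
          {x | A.mulVec x ≤ 0 ∧ ∀ i ∈ I, A.mulVec x i = 0}) = 2) ↔
      (A.submatrix
        (fun i : {i : Fin m // A.mulVec r i = 0 ∧ A.mulVec r' i = 0} => (i : Fin m))
        id).rank = n - 2 := by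
  show (∃ I, r ∈ coneFace A I ∧ r' ∈ coneFace A I ∧
    Module.finrank ℚ (Submodule.span ℚ (coneFace A I)) = 2) ↔ _
  set B := A.submatrix
    (fun i : {i : Fin m // A.mulVec r i = 0 ∧ A.mulVec r' i = 0} => (i : Fin m)) id
  have hli : LinearIndependent ℚ ![r, r'] :=
    (LinearIndependent.pair_iff' hr.1).2 fun a h => hnp a h.symm
  have hpair : Module.finrank ℚ (Submodule.span ℚ (Set.range ![r, r'])) = 2 := by
    simpa using finrank_span_eq_card hli
  have hpair_le : Submodule.span ℚ (Set.range ![r, r']) ≤ LinearMap.ker B.mulVecLin :=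
    Submodule.span_le.2 <| Set.range_subset_iff.2 <| Fin.forall_fin_two.2
      ⟨mem_ker_mulVecLin_submatrix_val.2 fun _ hi => hi.1,
        mem_ker_mulVecLin_submatrix_val.2 fun _ hi => hi.2⟩
  have hnullity := B.rank_add_finrank_ker
  have hker_ge := Submodule.finrank_mono hpair_le
  rw [Fintype.card_fin] at hnullity
  constructor
  · rintro ⟨I, hrI, hr'I, hdim⟩
    have hker_le : Module.finrank ℚ (LinearMap.ker B.mulVecLin) ≤
        Module.finrank ℚ (Submodule.span ℚ (coneFace A I)) :=
      Submodule.finrank_mono (ker_submatrix_le_span_coneFace hrI hr'I)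
    omega
  · intro hrank
    set S : Set (Fin m) := {i | (A *ᵥ r) i = 0 ∧ (A *ᵥ r') i = 0}
    have hrS : r ∈ coneFace A S := ⟨hr.2.1, fun _ hi => hi.1⟩
    have hr'S : r' ∈ coneFace A S := ⟨hr'.2.1, fun _ hi => hi.2⟩
    have hspan_eq : Submodule.span ℚ (coneFace A S) = LinearMap.ker B.mulVecLin :=
      le_antisymm span_coneFace_le_ker_submatrix (ker_submatrix_le_span_coneFace hrS hr'S)
    refine ⟨S, hrS, hr'S, ?_⟩
    rw [hspan_eq]
    omega

/-- Adjacency test: two non-proportional extreme rays `r, r'` of the pointed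
cone `{x | A x ≤ 0}` span a two-dimensional face iff the submatrix of rows
indexed by `ζ(r) ∩ ζ(r')` has rank `n − 2`. -/
theorem adjacency_test (m n : ℕ) (A : Matrix (Fin m) (Fin n) ℚ)
    (hpointed : A.rank = n) (r r' : Fin n → ℚ)
    (hr : IsExtremeRay A r) (hr' : IsExtremeRay A r')
    (hnp : ∀ lam : ℚ, r' ≠ lam • r) :
    (∃ I : Set (Fin m),
        r ∈ {x | A.mulVec x ≤ 0 ∧ ∀ i ∈ I, A.mulVec x i = 0} ∧
        r' ∈ {x | A.mulVec x ≤ 0 ∧ ∀ i ∈ I, A.mulVec x i = 0} ∧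
        Module.finrank ℚ (Submodule.span ℚ
          {x | A.mulVec x ≤ 0 ∧ ∀ i ∈ I, A.mulVec x i = 0}) = 2) ↔
      (A.submatrix
        (fun i : {i : Fin m // A.mulVec r i = 0 ∧ A.mulVec r' i = 0} => (i : Fin m))
        id).rank = n - 2 :=
  adjacency_test_general m n A r r' hr hr' hnp
end

section
/- Let Q = {(u, x) ∈ Q^p × Q^q | A u + B x ≤ c}. Let C = {y ∈ Q^m | yᵀA = 0, y ≥ 0} be the projection cone of Q with respect to u. Then the projection proj(Q; x) = {x | ∃u, (u,x) ∈ Q} is represented by the system { yᵀB x ≤ yᵀc : y ∈ ExtremeRays(C) }, i.e., x ∈ proj(Q; x) if and only if yᵀB x ≤ yᵀc for every extreme ray y of C. -/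
/-!
By Farkas' lemma, `A u ≤ c - B x` is solvable iff `0 ≤ yᵀ(c - B x)` for every `y` in the
projection cone `C = {y ≥ 0 | yᵀA = 0}`; Farkas' lemma itself follows by eliminating one variable
at a time (Fourier–Motzkin). It then suffices to test the extreme rays of `C`, because they
generate `C`: a nonzero `y ∈ C` that is not extreme admits a direction `d` with `dᵀA = 0`,
supported inside the support of `y` and taking both signs, and moving from `y` along `±d` until a
coordinate vanishes writes `y` as a positive combination of two points of `C` of smaller support.
-/

open Matrix

/-- `r` is an extreme ray of the convex cone `C`: a nonzero element of `C`
such that whenever `r` is the sum of two elements of `C`, each summand is a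
scalar multiple of `r`. -/
def IsExtremeRayOfSet {m : ℕ} (C : Set (Fin m → ℚ)) (r : Fin m → ℚ) : Prop :=
  r ∈ C ∧ r ≠ 0 ∧ ∀ x ∈ C, ∀ y ∈ C, x + y = r → ∃ lam : ℚ, x = lam • r

theorem Finite.exists_between_of_forall_le {α β γ : Type*} [LinearOrder α] [Nonempty α]
    [Finite β] [Finite γ] {f : β → α} {g : γ → α} (h : ∀ i j, f i ≤ g j) :
    ∃ a, (∀ i, f i ≤ a) ∧ ∀ j, a ≤ g j := by
  by_cases hβ : Nonempty β
  · obtain ⟨i₀, hi₀⟩ := Finite.exists_max f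
    exact ⟨f i₀, hi₀, h i₀⟩
  by_cases hγ : Nonempty γ
  · obtain ⟨j₀, hj₀⟩ := Finite.exists_min g
    exact ⟨g j₀, fun i => h i j₀, hj₀⟩
  obtain ⟨a⟩ := ‹Nonempty α›
  exact ⟨a, fun i => (hβ ⟨i⟩).elim, fun j => (hγ ⟨j⟩).elim⟩

namespace FourierMotzkin

variable {𝕜 ι : Type*} [Field 𝕜] [LinearOrder 𝕜] [DecidableEq ι]

-- Eliminating the variable with coefficient column `a`: each row where it is positive is combined
-- with each row where it is negative so that it cancels; rows where it vanishes are kept.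
abbrev Row (a : ι → 𝕜) : Type _ := ({i // 0 < a i} × {j // a j < 0}) ⊕ {k // a k = 0}

def combination (a : ι → 𝕜) : Matrix (Row a) ι 𝕜
  | .inl (i, j) => Pi.single i.1 (-a j) + Pi.single j.1 (a i)
  | .inr k => Pi.single k.1 1

lemma combination_nonneg [IsStrictOrderedRing 𝕜] (a : ι → 𝕜) (r : Row a) (l : ι) :
    0 ≤ combination a r l := by
  rcases r with ⟨i, j⟩ | k
  · have := i.2; have := j.2
    simp only [combination, Pi.add_apply, Pi.single_apply]
    split_ifs <;> linarith
  · simp only [combination, Pi.single_apply]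
    split_ifs <;> norm_num

variable [Fintype ι]

@[simp] lemma combination_mulVec_inl (a v : ι → 𝕜) (i : {i // 0 < a i}) (j : {j // a j < 0}) :
    (combination a *ᵥ v) (.inl (i, j)) = -a j * v i + a i * v j := by
  change (Pi.single i.1 (-a j) + Pi.single j.1 (a i)) ⬝ᵥ v = _
  rw [add_dotProduct, single_dotProduct, single_dotProduct]

@[simp] lemma combination_mulVec_inr (a v : ι → 𝕜) (k : {k // a k = 0}) :
    (combination a *ᵥ v) (.inr k) = v k := by
  change Pi.single k.1 1 ⬝ᵥ v = _
  rw [single_dotProduct, one_mul]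

lemma combination_mulVec_self (a : ι → 𝕜) : combination a *ᵥ a = 0 := by
  ext (⟨i, j⟩ | k)
  · simp only [combination_mulVec_inl, Pi.zero_apply]; ring
  · simpa using k.2

lemma exists_mul_le_of_nonneg_combination_mulVec [IsStrictOrderedRing 𝕜] {a s : ι → 𝕜}
    (hs : 0 ≤ combination a *ᵥ s) : ∃ t, ∀ i, a i * t ≤ s i := by
  have hpair (j : {j // a j < 0}) (i : {i // 0 < a i}) : s j / a j ≤ s i / a i := by
    have := hs (.inl (i, j))
    rw [Pi.zero_apply, combination_mulVec_inl] at this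
    rw [div_le_iff_of_neg j.2, div_mul_eq_mul_div, div_le_iff₀ i.2]
    linarith
  obtain ⟨t, hlow, hupp⟩ := Finite.exists_between_of_forall_le hpair
  refine ⟨t, fun i => ?_⟩
  rcases lt_trichotomy (a i) 0 with hi | hi | hi
  · have := hlow ⟨i, hi⟩
    rwa [div_le_iff_of_neg hi, mul_comm] at this
  · simpa [hi] using hs (.inr ⟨i, hi⟩)
  · have := hupp ⟨i, hi⟩
    rwa [le_div_iff₀ hi, mul_comm] at this

end FourierMotzkin

section Farkas

variable {𝕜 ι : Type*} [Field 𝕜] [LinearOrder 𝕜] [IsStrictOrderedRing 𝕜]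
  [Fintype ι] [DecidableEq ι]

open FourierMotzkin in
theorem Matrix.exists_mulVec_le_or_exists_vecMul_eq_zero {p : ℕ} (A : Matrix ι (Fin p) 𝕜)
    (b : ι → 𝕜) :
    (∃ u, A *ᵥ u ≤ b) ∨ ∃ y, 0 ≤ y ∧ y ᵥ* A = 0 ∧ y ⬝ᵥ b < 0 := by
  induction p generalizing ι with
  | zero =>
    by_cases hb : 0 ≤ b
    · exact .inl ⟨0, by simpa using hb⟩
    obtain ⟨i, hi⟩ : ∃ i, b i < 0 := by simpa [Pi.le_def] using hb
    refine .inr ⟨Pi.single i 1, ?_, Subsingleton.elim _ _, by simpa using hi⟩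
    simp [Pi.single_nonneg]
  | succ p ih =>
    set W := combination (Aᵀ 0)
    set Aₜ := A.submatrix id Fin.succ
    rcases ih (W * Aₜ) (W *ᵥ b) with ⟨u, hu⟩ | ⟨y, hy, hyA, hyb⟩
    · obtain ⟨t, ht⟩ := exists_mul_le_of_nonneg_combination_mulVec (s := b - Aₜ *ᵥ u) (by
        rwa [mulVec_sub, mulVec_mulVec, sub_nonneg])
      refine .inl ⟨Fin.cons t u, fun i => ?_⟩
      have hi : (A *ᵥ Fin.cons t u) i = A i 0 * t + (Aₜ *ᵥ u) i := by
        simp [mulVec, dotProduct, Fin.sum_univ_succ, Aₜ]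
      have := ht i
      simp only [Pi.sub_apply] at this
      change A i 0 * t ≤ _ at this
      linarith
    · refine .inr ⟨y ᵥ* W,
        fun l => dotProduct_nonneg_of_nonneg hy fun r => combination_nonneg _ r l,
        ?_, by rwa [← dotProduct_mulVec]⟩
      ext j
      refine Fin.cases ?_ (fun k => ?_) j
      · change y ᵥ* W ⬝ᵥ Aᵀ 0 = 0
        rw [← dotProduct_mulVec, combination_mulVec_self, dotProduct_zero]
      · change (y ᵥ* W ᵥ* Aₜ) k = 0
        rw [vecMul_vecMul, hyA, Pi.zero_apply]

theorem Matrix.exists_mulVec_le_iff {n : Type*} [Fintype n] (A : Matrix ι n 𝕜) (b : ι → 𝕜) :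
    (∃ u, A *ᵥ u ≤ b) ↔ ∀ y, y ᵥ* A = 0 → 0 ≤ y → 0 ≤ y ⬝ᵥ b := by
  refine ⟨fun ⟨u, hu⟩ y hyA hy => ?_, fun h => ?_⟩
  · calc 0 = y ⬝ᵥ (A *ᵥ u) := by rw [dotProduct_mulVec, hyA, zero_dotProduct]
      _ ≤ y ⬝ᵥ b := dotProduct_le_dotProduct_of_nonneg_left hu hy
  set e := Fintype.equivFin n
  rcases exists_mulVec_le_or_exists_vecMul_eq_zero (A.submatrix id e.symm) b with
    ⟨u, hu⟩ | ⟨y, hy, hyA, hyb⟩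
  · exact ⟨u ∘ e, by simpa [submatrix_mulVec_equiv] using hu⟩
  · have hyA' : y ᵥ* A = 0 := funext fun j => by simpa [vecMul] using congrFun hyA (e j)
    exact absurd (h y hyA' hy) hyb.not_ge

end Farkas

section

variable {𝕜 ι : Type*} [Field 𝕜] [LinearOrder 𝕜] [IsStrictOrderedRing 𝕜] [Fintype ι]

lemma exists_pos_nonneg_add_smul_support_ssubset {y d : ι → 𝕜} (hy : 0 ≤ y)
    (hd : ∀ l, y l = 0 → d l = 0) (hneg : ∃ k, d k < 0) :
    ∃ t : 𝕜, 0 < t ∧ 0 ≤ y + t • d ∧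
      Finset.univ.filter (fun l => (y + t • d) l ≠ 0) ⊂ Finset.univ.filter (fun l => y l ≠ 0) := by
  have : Nonempty {k // d k < 0} := let ⟨k, hk⟩ := hneg; ⟨⟨k, hk⟩⟩
  -- the ratio test: move along `d` until the first coordinate of `y` hits zero
  obtain ⟨⟨k, hk⟩, hmin⟩ := Finite.exists_min fun k : {k // d k < 0} => y k / -d k
  have hyk : 0 < y k := (hy k).lt_of_ne fun h => hk.ne (hd k h.symm)
  have ht : 0 < y k / -d k := div_pos hyk (neg_pos.2 hk)
  refine ⟨y k / -d k, ht, fun l => ?_, ?_⟩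
  · simp only [Pi.add_apply, Pi.smul_apply, smul_eq_mul, Pi.zero_apply]
    rcases lt_or_ge (d l) 0 with hl | hl
    · have := hmin ⟨l, hl⟩
      rw [le_div_iff₀ (neg_pos.2 hl)] at this
      linarith
    · exact add_nonneg (hy l) (mul_nonneg ht.le hl)
  · rw [Finset.ssubset_iff_of_subset]
    · refine ⟨k, by simpa using hyk.ne', ?_⟩
      simp only [Finset.mem_filter, Finset.mem_univ, true_and, not_not, Pi.add_apply,
        Pi.smul_apply, smul_eq_mul]
      rw [div_neg, neg_mul, div_mul_cancel₀ _ hk.ne, add_neg_cancel]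
    · intro l
      simp only [Finset.mem_filter, Finset.mem_univ, true_and]
      exact mt fun hl => by simp [hl, hd l hl]

lemma exists_mul_lt_mul_of_forall_ne_smul {a y : ι → 𝕜} (ha : ∀ l, y l = 0 → a l = 0)
    (h : ∀ μ : 𝕜, a ≠ μ • y) : ∃ i j, y i ≠ 0 ∧ y j ≠ 0 ∧ a i * y j < a j * y i := by
  by_contra! hle
  obtain ⟨i₀, hi₀⟩ : ∃ i₀, y i₀ ≠ 0 := by
    by_contra! hy
    exact h 0 (funext fun l => by simp [ha l (hy l)])
  refine h (a i₀ / y i₀) (funext fun l => ?_)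
  by_cases hl : y l = 0
  · simp [hl, ha l hl]
  · have := (hle l i₀ hl hi₀).antisymm (hle i₀ l hi₀ hl)
    rw [Pi.smul_apply, smul_eq_mul, div_mul_eq_mul_div, eq_div_iff hi₀]
    linarith

lemma PointedCone.mem_of_add_smul_mem_of_sub_smul_mem {E : Type*} [AddCommGroup E] [Module 𝕜 E]
    {C : PointedCone 𝕜 E} {y d : E} {t₁ t₂ : 𝕜} (ht₁ : 0 < t₁) (ht₂ : 0 < t₂)
    (h₁ : y + t₁ • d ∈ C) (h₂ : y - t₂ • d ∈ C) : y ∈ C := by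
  have hy : y = (t₁ + t₂)⁻¹ • (t₂ • (y + t₁ • d) + t₁ • (y - t₂ • d)) := by
    rw [eq_inv_smul_iff₀ (by positivity)]
    module
  rw [hy]
  exact C.smul_mem (by positivity) (C.add_mem (C.smul_mem ht₂.le h₁) (C.smul_mem ht₁.le h₂))

end

section ProjectionCone

variable {m : ℕ} (L : Submodule ℚ (Fin m → ℚ))

lemma exists_two_signed_of_not_isExtremeRayOfSet {y : Fin m → ℚ} (hyL : y ∈ L) (hy : 0 ≤ y)
    (hy0 : y ≠ 0) (hext : ¬IsExtremeRayOfSet {v | v ∈ L ∧ 0 ≤ v} y) :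
    ∃ d ∈ L, (∀ l, y l = 0 → d l = 0) ∧ (∃ i, d i < 0) ∧ ∃ j, 0 < d j := by
  simp only [IsExtremeRayOfSet, not_and, not_forall, not_exists] at hext
  obtain ⟨a, ⟨haL, ha⟩, b, ⟨-, hb⟩, hab, hne⟩ := hext ⟨hyL, hy⟩ hy0
  have hay (l) (hl : y l = 0) : a l = 0 :=
    le_antisymm (by rw [← hl, ← hab]; exact le_add_of_nonneg_right (hb l)) (ha l)
  obtain ⟨i, j, hi, hj, hlt⟩ := exists_mul_lt_mul_of_forall_ne_smul hay hne
  have hi' : 0 < y i := (hy i).lt_of_ne' hi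
  have hj' : 0 < y j := (hy j).lt_of_ne' hj
  -- `d / (2 y_i y_j) = a - s • y` with `s` halfway between `a i / y i < a j / y j`
  refine ⟨(2 * y i * y j) • a - (a i * y j + a j * y i) • y,
    L.sub_mem (L.smul_mem _ haL) (L.smul_mem _ hyL), fun l hl => by simp [hl, hay l hl],
    ⟨i, ?_⟩, ⟨j, ?_⟩⟩ <;>
  · simp only [Pi.sub_apply, Pi.smul_apply, smul_eq_mul]
    nlinarith [mul_pos hi' (sub_pos.2 hlt), mul_pos hj' (sub_pos.2 hlt)]

theorem mem_hull_isExtremeRayOfSet {y : Fin m → ℚ} (hyL : y ∈ L) (hy : 0 ≤ y) :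
    y ∈ PointedCone.hull ℚ {r | IsExtremeRayOfSet {v | v ∈ L ∧ 0 ≤ v} r} := by
  induction hn : (Finset.univ.filter fun l => y l ≠ 0).card using Nat.strong_induction_on
    generalizing y with
  | _ n ih =>
    by_cases hy0 : y = 0
    · rw [hy0]; exact zero_mem _
    by_cases hext : IsExtremeRayOfSet {v | v ∈ L ∧ 0 ≤ v} y
    · exact PointedCone.subset_hull hext
    obtain ⟨d, hdL, hd, hneg, j, hj⟩ :=
      exists_two_signed_of_not_isExtremeRayOfSet L hyL hy hy0 hext
    have shrink (e) (heL : e ∈ L) (he : ∀ l, y l = 0 → e l = 0) (hneg : ∃ k, e k < 0) :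
        ∃ t : ℚ, 0 < t ∧
          y + t • e ∈ PointedCone.hull ℚ {r | IsExtremeRayOfSet {v | v ∈ L ∧ 0 ≤ v} r} := by
      obtain ⟨t, ht, hnn, hss⟩ := exists_pos_nonneg_add_smul_support_ssubset hy he hneg
      exact ⟨t, ht, ih _ (hn ▸ Finset.card_lt_card hss) (L.add_mem hyL (L.smul_mem t heL)) hnn rfl⟩
    obtain ⟨t₁, ht₁, h₁⟩ := shrink d hdL hd hneg
    obtain ⟨t₂, ht₂, h₂⟩ := shrink (-d) (L.neg_mem hdL) (fun l hl => by simp [hd l hl])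
      ⟨j, by simpa using hj⟩
    rw [smul_neg, ← sub_eq_add_neg] at h₂
    exact PointedCone.mem_of_add_smul_mem_of_sub_smul_mem ht₁ ht₂ h₁ h₂

theorem forall_dotProduct_nonneg_iff_forall_isExtremeRayOfSet (w : Fin m → ℚ) :
    (∀ y ∈ L, 0 ≤ y → 0 ≤ y ⬝ᵥ w) ↔
      ∀ r, IsExtremeRayOfSet {v | v ∈ L ∧ 0 ≤ v} r → 0 ≤ r ⬝ᵥ w := by
  refine ⟨fun h r hr => h r hr.1.1 hr.1.2, fun h y hyL hy => ?_⟩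
  have hw : w ∈ PointedCone.dual (dotProductBilin ℚ ℚ)
      (PointedCone.hull ℚ {r | IsExtremeRayOfSet {v | v ∈ L ∧ 0 ≤ v} r}) := by
    rw [PointedCone.dual_hull]
    exact fun r hr => h r hr
  exact hw (mem_hull_isExtremeRayOfSet L hyL hy)

end ProjectionCone

/-- Projection lemma for block elimination: with
`C = {y | yᵀA = 0, y ≥ 0}` the projection cone and `E` a set of
representatives of the extreme rays of `C`, a point `x` lies in
`proj(Q; x) = {x | ∃u, A u + B x ≤ c}` iff `yᵀB x ≤ yᵀc` for all `y ∈ E`. -/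
theorem projection_lemma (m p q : ℕ) (A : Matrix (Fin m) (Fin p) ℚ)
    (B : Matrix (Fin m) (Fin q) ℚ) (c : Fin m → ℚ) (E : Set (Fin m → ℚ))
    (hE1 : ∀ y ∈ E, IsExtremeRayOfSet {y : Fin m → ℚ | Matrix.vecMul y A = 0 ∧ 0 ≤ y} y)
    (hE2 : ∀ y : Fin m → ℚ,
      IsExtremeRayOfSet {y : Fin m → ℚ | Matrix.vecMul y A = 0 ∧ 0 ≤ y} y →
        ∃ z ∈ E, ∃ lam : ℚ, 0 < lam ∧ y = lam • z)
    (x : Fin q → ℚ) :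
    (∃ u : Fin p → ℚ, A.mulVec u + B.mulVec x ≤ c) ↔
      ∀ y ∈ E, Matrix.vecMul y B ⬝ᵥ x ≤ y ⬝ᵥ c := by
  have hrep (w : Fin m → ℚ) :
      (∀ r, IsExtremeRayOfSet {y | y ᵥ* A = 0 ∧ 0 ≤ y} r → 0 ≤ r ⬝ᵥ w) ↔
        ∀ z ∈ E, 0 ≤ z ⬝ᵥ w := by
    refine ⟨fun h z hz => h z (hE1 z hz), fun h r hr => ?_⟩
    obtain ⟨z, hz, lam, hlam, rfl⟩ := hE2 r hr
    rw [smul_dotProduct]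
    exact smul_nonneg hlam.le (h z hz)
  calc (∃ u, A *ᵥ u + B *ᵥ x ≤ c) ↔ ∃ u, A *ᵥ u ≤ c - B *ᵥ x := by
        simp only [le_sub_iff_add_le]
    _ ↔ ∀ y, y ᵥ* A = 0 → 0 ≤ y → 0 ≤ y ⬝ᵥ (c - B *ᵥ x) := exists_mulVec_le_iff A _
    _ ↔ ∀ z ∈ E, 0 ≤ z ⬝ᵥ (c - B *ᵥ x) :=
        (forall_dotProduct_nonneg_iff_forall_isExtremeRayOfSet
          (LinearMap.ker A.vecMulLinear) _).trans (hrep _)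
    _ ↔ ∀ y ∈ E, y ᵥ* B ⬝ᵥ x ≤ y ⬝ᵥ c := by
        simp only [dotProduct_sub, sub_nonneg, dotProduct_mulVec]
end

section
/- Computing the characteristic cone commutes with projection: for a polyhedron Q = {(u,x) ∈ Q^p × Q^q | A u + B x ≤ c} (nonempty), CharCone(proj(Q; x)) = proj(CharCone(Q); x), where CharCone(Q) = {(u,x) | A u + B x ≤ 0} and proj denotes projection onto the x-coordinates. -/
open Matrix Finset

lemma exists_between_finset {ι : Type*} (s t : Finset ι) (f g : ι → ℚ)
    (h : ∀ j ∈ s, ∀ i ∈ t, f j ≤ g i) :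
    ∃ x : ℚ, (∀ j ∈ s, f j ≤ x) ∧ ∀ i ∈ t, x ≤ g i := by
  rcases s.eq_empty_or_nonempty with rfl | hs
  · rcases t.eq_empty_or_nonempty with rfl | ht
    · exact ⟨0, by simp, by simp⟩
    · exact ⟨t.inf' ht g, by simp, fun i hi => Finset.inf'_le _ hi⟩
  · refine ⟨s.sup' hs f, fun j hj => Finset.le_sup' _ hj, fun i hi => ?_⟩
    exact Finset.sup'_le _ _ fun j hj => h j hj i hi

lemma nonneg_of_forall_eps {x y : ℚ} (h : ∀ ε : ℚ, 0 < ε → 0 ≤ x + ε * y) : 0 ≤ x := by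
  by_contra hx
  push_neg at hx
  by_cases hy : y ≤ 0
  · have := h 1 one_pos; nlinarith
  · push_neg at hy
    have := h (-x / (2 * y)) (by apply div_pos <;> nlinarith)
    rw [div_mul_eq_mul_div, mul_comm (-x) y, mul_comm 2 y, mul_div_mul_left _ _ (ne_of_gt hy)] at this
    linarith

lemma feasible_of_eps : ∀ (p : ℕ) {ι : Type} [Fintype ι] (A : Matrix ι (Fin p) ℚ)
    (b c : ι → ℚ),
    (∀ ε : ℚ, 0 < ε → ∃ v, A.mulVec v ≤ b + ε • c) → ∃ v, A.mulVec v ≤ b := by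
  intro p
  induction p with
  | zero =>
    intro ι _ A b c h
    refine ⟨0, fun i => ?_⟩
    have h0 : ∀ (v : Fin 0 → ℚ), A.mulVec v i = 0 := by
      intro v; simp [Matrix.mulVec, dotProduct]
    rw [h0]
    refine nonneg_of_forall_eps (x := b i) (y := c i) fun ε hε => ?_
    obtain ⟨v, hv⟩ := h ε hε
    have := hv i
    rw [h0] at this
    simpa using this
  | succ p ih =>
    intro ι _ A b c h
    set A' : Matrix ι (Fin p) ℚ := fun i k => A i k.castSucc with hA'
    set a : ι → ℚ := fun i => A i (Fin.last p) with ha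
    have hmul : ∀ (v : Fin (p + 1) → ℚ) i,
        A.mulVec v i = A'.mulVec (fun k => v k.castSucc) i + a i * v (Fin.last p) := by
      intro v i
      simp [Matrix.mulVec, dotProduct, Fin.sum_univ_castSucc, hA', ha]
    set M : Matrix (ι ⊕ ι × ι) (Fin p) ℚ := fun r k =>
      match r with
      | Sum.inl i => if a i = 0 then A' i k else 0
      | Sum.inr (i, j) => if 0 < a i ∧ a j < 0 then a i * A' j k - a j * A' i k else 0
      with hM
    set E : (ι → ℚ) → (ι ⊕ ι × ι) → ℚ := fun d r =>
      match r with
      | Sum.inl i => if a i = 0 then d i else 0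
      | Sum.inr (i, j) => if 0 < a i ∧ a j < 0 then a i * d j - a j * d i else 0
      with hE
    have Mrow1 : ∀ (w : Fin p → ℚ) i, M.mulVec w (Sum.inl i)
        = if a i = 0 then A'.mulVec w i else 0 := by
      intro w i
      by_cases h0 : a i = 0 <;>
        simp [Matrix.mulVec, dotProduct, hM, h0]
    have Mrow2 : ∀ (w : Fin p → ℚ) i j, M.mulVec w (Sum.inr (i, j))
        = if 0 < a i ∧ a j < 0 then a i * A'.mulVec w j - a j * A'.mulVec w i else 0 := by
      intro w i j
      by_cases h0 : 0 < a i ∧ a j < 0 <;>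
        simp [Matrix.mulVec, dotProduct, hM, h0, sub_mul, mul_assoc,
          Finset.sum_sub_distrib, Finset.mul_sum]
    have fwd : ∀ d : ι → ℚ, (∃ v, A.mulVec v ≤ d) → ∃ w, M.mulVec w ≤ E d := by
      rintro d ⟨v, hv⟩
      refine ⟨fun k => v k.castSucc, ?_⟩
      rintro (i | ⟨i, j⟩)
      · rw [Mrow1]
        by_cases h0 : a i = 0
        · have := hv i; rw [hmul v i, h0] at this
          simp only [hE, h0, if_true]
          simpa using this
        · simp [hE, h0]
      · rw [Mrow2]
        by_cases h0 : 0 < a i ∧ a j < 0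
        · have h1 := hv i; rw [hmul v i] at h1
          have h2 := hv j; rw [hmul v j] at h2
          rw [if_pos h0]
          have hEr : E d (Sum.inr (i, j)) = a i * d j - a j * d i := by
            simp only [hE]; rw [if_pos h0]
          rw [hEr]
          nlinarith [h0.1, h0.2, mul_le_mul_of_nonneg_left h2 h0.1.le,
            mul_le_mul_of_nonpos_left h1 h0.2.le]
        · simp [hE, h0]
    have bwd : ∀ d : ι → ℚ, (∃ w, M.mulVec w ≤ E d) → ∃ v, A.mulVec v ≤ d := by
      rintro d ⟨w, hw⟩
      obtain ⟨t, ht1, ht2⟩ := exists_between_finset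
        (Finset.univ.filter fun j => a j < 0)
        (Finset.univ.filter fun i => 0 < a i)
        (fun j => (d j - A'.mulVec w j) / a j)
        (fun i => (d i - A'.mulVec w i) / a i)
        (by
          intro j hj i hi
          simp only [Finset.mem_filter, Finset.mem_univ, true_and] at hj hi
          have hc : 0 < a i ∧ a j < 0 := ⟨hi, hj⟩
          have hpair := hw (Sum.inr (i, j))
          rw [Mrow2, if_pos hc] at hpair
          have hEr : E d (Sum.inr (i, j)) = a i * d j - a j * d i := by
            simp only [hE]; rw [if_pos hc]
          rw [hEr] at hpair
          show (d j - A'.mulVec w j) / a j ≤ (d i - A'.mulVec w i) / a i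
          rw [div_le_iff_of_neg hj, div_mul_eq_mul_div, div_le_iff₀ hi]
          nlinarith [hpair, hi, hj])
      refine ⟨Fin.snoc w t, fun i => ?_⟩
      have hs : A.mulVec (Fin.snoc w t) i = A'.mulVec w i + a i * t := by
        rw [hmul]
        simp [Fin.snoc_castSucc, Fin.snoc_last]
      rw [hs]
      rcases lt_trichotomy (a i) 0 with hlt | heq | hgt
      · have h1 := ht1 i (by simp [hlt])
        rw [div_le_iff_of_neg hlt] at h1
        linarith
      · have h1 := hw (Sum.inl i)
        rw [Mrow1, if_pos heq] at h1
        rw [hE] at h1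
        simp only [if_pos heq] at h1
        rw [heq]; linarith
      · have h1 := ht2 i (by simp [hgt])
        rw [le_div_iff₀ hgt] at h1
        linarith
    have Elin : ∀ ε : ℚ, E (b + ε • c) = E b + ε • E c := by
      intro ε
      funext r
      rcases r with i | ⟨i, j⟩ <;>
        · simp only [hE, Pi.add_apply, Pi.smul_apply, smul_eq_mul]
          split_ifs <;> ring
    obtain ⟨w, hw⟩ := ih M (E b) (E c) (fun ε hε => by
      obtain ⟨w, hw⟩ := fwd (b + ε • c) (h ε hε)
      exact ⟨w, by rwa [Elin ε] at hw⟩)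
    exact bwd b ⟨w, hw⟩

/-- Computing the characteristic cone commutes with projection: for a
nonempty polyhedron `Q = {(u,x) | A u + B x ≤ c}`, the characteristic cone of
`proj(Q; x)` (its set of recession directions) equals the projection of
`CharCone(Q) = {(u,x) | A u + B x ≤ 0}` onto the `x`-coordinates. -/
theorem charCone_commutes_with_projection (m p q : ℕ)
    (A : Matrix (Fin m) (Fin p) ℚ) (B : Matrix (Fin m) (Fin q) ℚ)
    (c : Fin m → ℚ)
    (hne : ∃ (u : Fin p → ℚ) (x : Fin q → ℚ), A.mulVec u + B.mulVec x ≤ c) :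
    {y : Fin q → ℚ |
        ∀ x ∈ {x : Fin q → ℚ | ∃ u : Fin p → ℚ, A.mulVec u + B.mulVec x ≤ c},
          x + y ∈ {x : Fin q → ℚ | ∃ u : Fin p → ℚ, A.mulVec u + B.mulVec x ≤ c}} =
      {y : Fin q → ℚ | ∃ u : Fin p → ℚ, A.mulVec u + B.mulVec y ≤ 0} := by
  obtain ⟨u₀, x₀, h₀⟩ := hne
  ext y
  simp only [Set.mem_setOf_eq]
  constructor
  · intro hy
    have hmem : ∀ n : ℕ, ∃ u, A.mulVec u + B.mulVec (x₀ + (n : ℚ) • y) ≤ c := by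
      intro n
      induction n with
      | zero => exact ⟨u₀, by simpa using h₀⟩
      | succ n ihn =>
        obtain ⟨u', hu'⟩ := hy (x₀ + (n : ℚ) • y) ihn
        refine ⟨u', ?_⟩
        have : x₀ + ((n : ℚ) + 1) • y = x₀ + (n : ℚ) • y + y := by
          rw [add_smul, one_smul, add_assoc]
        rw [Nat.cast_succ, this]
        exact hu'
    have key : ∀ ε : ℚ, 0 < ε → ∃ v, A.mulVec v ≤
        (-(B.mulVec y)) + ε • (c - B.mulVec x₀ - A.mulVec u₀) := by
      intro ε hε
      obtain ⟨n, hn⟩ := exists_nat_gt (1 / ε)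
      have hn0 : (0 : ℚ) < n := lt_of_le_of_lt (by positivity) hn
      have hnε : 1 < (n : ℚ) * ε := by
        rw [div_lt_iff₀ hε] at hn; linarith
      obtain ⟨u, hu⟩ := hmem n
      refine ⟨(n : ℚ)⁻¹ • (u - u₀), fun i => ?_⟩
      have hAv : A.mulVec ((n : ℚ)⁻¹ • (u - u₀)) i
          = (n : ℚ)⁻¹ * (A.mulVec u i - A.mulVec u₀ i) := by
        rw [Matrix.mulVec_smul, Matrix.mulVec_sub]
        simp
      rw [hAv]
      have hui : A.mulVec u i + (B.mulVec x₀ i + (n : ℚ) * B.mulVec y i) ≤ c i := by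
        have := hu i
        rwa [Matrix.mulVec_add, Matrix.mulVec_smul, Pi.add_apply, Pi.add_apply,
          Pi.smul_apply, smul_eq_mul] at this
      have hc' : 0 ≤ c i - B.mulVec x₀ i - A.mulVec u₀ i := by
        have := h₀ i
        simp only [Pi.add_apply] at this
        linarith
      simp only [Pi.add_apply, Pi.neg_apply, Pi.smul_apply, Pi.sub_apply, smul_eq_mul]
      rw [inv_mul_le_iff₀ hn0]
      nlinarith [mul_nonneg (sub_nonneg.2 hnε.le) hc']
    obtain ⟨u, hu⟩ := feasible_of_eps p A (-(B.mulVec y))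
      (c - B.mulVec x₀ - A.mulVec u₀) key
    refine ⟨u, fun i => ?_⟩
    have := hu i
    simp only [Pi.neg_apply] at this
    simp only [Pi.add_apply, Pi.zero_apply]
    linarith
  · rintro ⟨u, hu⟩ x ⟨u', hu'⟩
    refine ⟨u' + u, fun i => ?_⟩
    have h1 := hu i
    have h2 := hu' i
    simp only [Pi.add_apply, Pi.zero_apply] at h1 h2 ⊢
    rw [Matrix.mulVec_add, Matrix.mulVec_add, Pi.add_apply, Pi.add_apply]
    linarith
end

section
/- Let Q = {(u,x) ∈ Q^p × Q^q | A u + B x ≤ c} be a full-dimensional pointed polyhedron with [A B] of full column rank, and assume the first q rows of B are linearly independent. Let B₀ = [[B₁, 0],[B₂, I_{m−q}]] where B₁, B₂ are the first q and last m−q rows of B. Define W⁰ = {(v, w, v₀) ∈ Q^q × Q^{m−q} × Q | [vᵀ, wᵀ]B₀⁻¹A = 0, [vᵀ, wᵀ]B₀⁻¹ ≥ 0, −[vᵀ, wᵀ]B₀⁻¹c + v₀ ≥ 0}. Then the polar cone of the homogenized cone of proj(Q; x) equals {(v, −v₀) | (v, v₀) ∈ proj(W⁰; {v, v₀})}. 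-/
/-!
The polar of the homogenization of a nonempty set `P` consists of the `(v, t)` with
`v ⬝ᵥ x + t ≤ 0` on `P`: the points at height `0` are recession directions, and a ray from a point
of `P` shows that they satisfy `v ⬝ᵥ d ≤ 0`. For `P = proj(Q; x)`, the affine Farkas lemma applied to
`A u + B x ≤ c` turns "`v ⬝ᵥ x ≤ v₀` on `P`" into a multiplier `z ≥ 0` with `z A = 0`, `z B = v` and
`z ⬝ᵥ c ≤ v₀`. Since the first `q` columns of the invertible matrix `B₀` are those of `B`, the
substitution `y = z B₀` turns these multipliers into the points of `W⁰` over `(v, v₀)`.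
Farkas' lemma itself is proved over any linearly ordered field by Fourier–Motzkin elimination.
-/

open Matrix

/-- The matrix `B₀ = [[B₁, 0], [B₂, I]]` obtained by augmenting `B` (whose
first `q` rows are `B₁`) with the last `m − q` standard basis columns. -/
def B0mat (m q : ℕ) (B : Matrix (Fin m) (Fin q) ℚ) : Matrix (Fin m) (Fin m) ℚ :=
  Matrix.of fun i j =>
    if h : (j : ℕ) < q then B i ⟨(j : ℕ), h⟩
    else if (i : ℕ) = (j : ℕ) then 1 else 0

/-- The projection `proj(W⁰; {v, v₀})` of the lifted cone
`W⁰ = {(v,w,v₀) | [vᵀ,wᵀ]B₀⁻¹A = 0, [vᵀ,wᵀ]B₀⁻¹ ≥ 0, −[vᵀ,wᵀ]B₀⁻¹c + v₀ ≥ 0}`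
onto the `(v, v₀)` coordinates; here `y` plays the role of `[vᵀ, wᵀ]`. -/
def projW0 (m p q : ℕ) (hq : q ≤ m) (A : Matrix (Fin m) (Fin p) ℚ)
    (B : Matrix (Fin m) (Fin q) ℚ) (c : Fin m → ℚ) : Set ((Fin q → ℚ) × ℚ) :=
  { vv | ∃ y : Fin m → ℚ,
      (∀ i : Fin q, y (Fin.castLE hq i) = vv.1 i) ∧
      Matrix.vecMul (Matrix.vecMul y (B0mat m q B)⁻¹) A = 0 ∧
      0 ≤ Matrix.vecMul y (B0mat m q B)⁻¹ ∧
      0 ≤ -(Matrix.vecMul y (B0mat m q B)⁻¹ ⬝ᵥ c) + vv.2 }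

/-- The projection `proj(Q; x)` of `Q = {(u,x) | A u + B x ≤ c}`. -/
def projQx (m p q : ℕ) (A : Matrix (Fin m) (Fin p) ℚ)
    (B : Matrix (Fin m) (Fin q) ℚ) (c : Fin m → ℚ) : Set (Fin q → ℚ) :=
  { x | ∃ u : Fin p → ℚ, A.mulVec u + B.mulVec x ≤ c }

/-- The homogenized cone of a set `P`: points `(x, x_last)` with `x_last > 0`
and `x / x_last ∈ P`, or `x_last = 0` and `x` a recession direction of `P`. -/
def homConeSet (q : ℕ) (P : Set (Fin q → ℚ)) : Set ((Fin q → ℚ) × ℚ) :=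
  { z | (0 < z.2 ∧ (z.2⁻¹ • z.1) ∈ P) ∨
        (z.2 = 0 ∧ ∀ x ∈ P, ∀ lam : ℚ, 0 ≤ lam → x + lam • z.1 ∈ P) }

theorem exists_forall_le_and_forall_le_s15 {α ι κ : Type*} [LinearOrder α] [Nonempty α]
    [Finite ι] [Finite κ] (f : ι → α) (g : κ → α) (h : ∀ i k, f i ≤ g k) :
    ∃ t, (∀ i, f i ≤ t) ∧ ∀ k, t ≤ g k := by
  rcases isEmpty_or_nonempty ι with hι | hι
  · rcases isEmpty_or_nonempty κ with hκ | hκ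
    · exact ⟨Classical.arbitrary α, isEmptyElim, isEmptyElim⟩
    · obtain ⟨k₀, hk₀⟩ := Finite.exists_min g
      exact ⟨g k₀, isEmptyElim, hk₀⟩
  · obtain ⟨i₀, hi₀⟩ := Finite.exists_max f
    exact ⟨f i₀, hi₀, h i₀⟩

section OrderedField

variable {K : Type*} [Field K] [LinearOrder K] [IsStrictOrderedRing K]

theorem nonpos_of_forall_add_mul_le_s15 {a b β : K} (h : ∀ l : K, 0 ≤ l → a + l * b ≤ β) :
    b ≤ 0 := by
  by_contra! hb
  have ha : a ≤ β := by simpa using h 0 le_rfl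
  have := h ((β - a + 1) / b) (div_nonneg (by linarith) hb.le)
  rw [div_mul_cancel₀ _ hb.ne'] at this
  linarith

theorem exists_forall_mul_le_of_pairwise {ι : Type*} [Finite ι] (a s : ι → K)
    (hzero : ∀ i, a i = 0 → 0 ≤ s i)
    (hpair : ∀ i k, 0 < a i → a k < 0 → 0 ≤ -a k * s i + a i * s k) :
    ∃ t, ∀ i, a i * t ≤ s i := by
  obtain ⟨t, hlower, hupper⟩ := exists_forall_le_and_forall_le_s15
    (fun k : {k // a k < 0} => s k / a k) (fun i : {i // 0 < a i} => s i / a i)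
    fun ⟨k, hk⟩ ⟨i, hi⟩ => by
      rw [div_le_iff_of_neg hk, div_mul_eq_mul_div, div_le_iff₀ hi]
      nlinarith [hpair i k hi hk]
  refine ⟨t, fun i => ?_⟩
  rcases lt_trichotomy (a i) 0 with hi | hi | hi
  · have := (div_le_iff_of_neg hi).mp (hlower ⟨i, hi⟩)
    linarith
  · simpa [hi] using hzero i hi
  · have := (le_div_iff₀ hi).mp (hupper ⟨i, hi⟩)
    linarith

end OrderedField

namespace Matrix

theorem mulVec_fin_cons {R ι : Type*} [CommSemiring R] {n : ℕ} (M : Matrix ι (Fin (n + 1)) R)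
    (t : R) (x : Fin n → R) (i : ι) :
    (M *ᵥ Fin.cons t x) i = M i 0 * t + (M.submatrix id Fin.succ *ᵥ x) i := by
  simp [mulVec, dotProduct, Fin.sum_univ_succ]

section FourierMotzkin

variable {K : Type*} [Field K] [LinearOrder K] {ι : Type*} [DecidableEq ι] (a : ι → K)

/-- Left multiplication by `fourierMotzkin a` is the Fourier–Motzkin elimination of the variable
whose coefficient column is `a`. -/
def fourierMotzkin :
    Matrix ({i // a i = 0} ⊕ {i // 0 < a i} × {k // a k < 0}) ι K :=
  of fun
    | .inl i => Pi.single i.1 1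
    | .inr (i, k) => (-a k) • Pi.single i.1 1 + a i • Pi.single k.1 1

theorem fourierMotzkin_nonneg [IsStrictOrderedRing K] (j) (i : ι) :
    0 ≤ fourierMotzkin a j i := by
  have single_nonneg (i' : ι) : (0 : K) ≤ Pi.single (M := fun _ => K) i' 1 i := by
    by_cases h : i = i' <;> simp [h]
  rcases j with ⟨i', -⟩ | ⟨⟨i', hi'⟩, ⟨k', hk'⟩⟩
  · exact single_nonneg i'
  · have := single_nonneg i'
    have := single_nonneg k'
    simp only [fourierMotzkin, of_apply, Pi.add_apply, Pi.smul_apply, smul_eq_mul]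
    nlinarith

variable [Fintype ι]

@[simp]
theorem fourierMotzkin_mulVec_inl (v : ι → K) (i) : (fourierMotzkin a *ᵥ v) (.inl i) = v i := by
  simp [fourierMotzkin, mulVec]

@[simp]
theorem fourierMotzkin_mulVec_inr (v : ι → K) (i k) :
    (fourierMotzkin a *ᵥ v) (.inr (i, k)) = -a k * v i + a i * v k := by
  change ((-a k) • Pi.single i.1 1 + a i • Pi.single k.1 1) ⬝ᵥ v = _
  simp [add_dotProduct]

theorem fourierMotzkin_mulVec_self : fourierMotzkin a *ᵥ a = 0 := by
  ext (⟨i, hi⟩ | ⟨i, k⟩)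
  · simpa using hi
  · simp only [fourierMotzkin_mulVec_inr, Pi.zero_apply]
    ring

theorem exists_forall_mul_le_of_fourierMotzkin [IsStrictOrderedRing K] (s : ι → K)
    (hs : 0 ≤ fourierMotzkin a *ᵥ s) : ∃ t, ∀ i, a i * t ≤ s i :=
  exists_forall_mul_le_of_pairwise a s (fun i hi => by simpa using hs (.inl ⟨i, hi⟩))
    fun i k hi hk => by simpa using hs (.inr (⟨i, hi⟩, ⟨k, hk⟩))

end FourierMotzkin

section Farkas

variable {K : Type*} [Field K] [LinearOrder K] [IsStrictOrderedRing K]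

theorem exists_infeasibility_certificate_fin {n : ℕ} {ι : Type*} [Fintype ι]
    (M : Matrix ι (Fin n) K) (c : ι → K) (hM : ¬ ∃ x, M *ᵥ x ≤ c) :
    ∃ z, 0 ≤ z ∧ z ᵥ* M = 0 ∧ z ⬝ᵥ c < 0 := by
  classical
  induction n generalizing ι with
  | zero =>
    obtain ⟨i, hi⟩ : ∃ i, c i < 0 := by
      by_contra! hc
      exact hM ⟨0, by simpa [Pi.le_def] using hc⟩
    exact ⟨Pi.single i 1, Pi.single_nonneg.mpr zero_le_one, Subsingleton.elim _ _,
      by simpa using hi⟩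
  | succ n ih =>
    set a : ι → K := fun i => M i 0
    set M' := M.submatrix id Fin.succ
    set W := fourierMotzkin a
    have hW : ¬ ∃ x', (W * M') *ᵥ x' ≤ W *ᵥ c := by
      rintro ⟨x', hx'⟩
      rw [← mulVec_mulVec, ← sub_nonneg, ← mulVec_sub] at hx'
      obtain ⟨t, ht⟩ := exists_forall_mul_le_of_fourierMotzkin a _ hx'
      refine hM ⟨Fin.cons t x', fun i => ?_⟩
      rw [mulVec_fin_cons]
      linarith [ht i, show (c - M' *ᵥ x') i = c i - (M' *ᵥ x') i from rfl]
    obtain ⟨z', hz'0, hz'M, hz'c⟩ := ih (W * M') (W *ᵥ c) hW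
    refine ⟨z' ᵥ* W, fun i => Finset.sum_nonneg fun j _ =>
      mul_nonneg (hz'0 j) (fourierMotzkin_nonneg a j i), ?_, ?_⟩
    · rw [vecMul_vecMul]
      ext j
      refine Fin.cases ?_ (fun j => congrFun hz'M j) j
      change z' ⬝ᵥ (W *ᵥ a) = 0
      rw [fourierMotzkin_mulVec_self, dotProduct_zero]
    · rwa [← dotProduct_mulVec]

theorem exists_infeasibility_certificate {ι σ : Type*} [Fintype ι] [Fintype σ]
    (M : Matrix ι σ K) (c : ι → K) (hM : ¬ ∃ x, M *ᵥ x ≤ c) :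
    ∃ z, 0 ≤ z ∧ z ᵥ* M = 0 ∧ z ⬝ᵥ c < 0 := by
  let e := Fintype.equivFin σ
  obtain ⟨z, hz0, hzM, hzc⟩ := exists_infeasibility_certificate_fin (M.submatrix id e.symm) c
    fun ⟨x, hx⟩ => hM ⟨x ∘ e, by simpa [submatrix_mulVec_equiv] using hx⟩
  refine ⟨z, hz0, funext fun s => ?_, hzc⟩
  simpa [vecMul, dotProduct] using congrFun hzM (e s)

theorem exists_nonneg_vecMul_eq {ι σ : Type*} [Fintype ι] [Fintype σ]
    (M : Matrix ι σ K) (f : σ → K) (h : ∀ x, M *ᵥ x ≤ 0 → f ⬝ᵥ x ≤ 0) :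
    ∃ z, 0 ≤ z ∧ z ᵥ* M = f := by
  -- the system `M x ≤ 0`, `f ⬝ᵥ x ≥ 1` is infeasible
  obtain ⟨z, hz0, hzM, hzc⟩ := exists_infeasibility_certificate
    (fromRows M (replicateRow Unit (-f))) (Sum.elim 0 fun _ => -1) fun ⟨x, hx⟩ => by
      simp only [fromRows_mulVec, Sum.elim_le_elim_iff] at hx
      have hfx := h x hx.1
      have hrow := hx.2 ()
      simp only [replicateRow_mulVec_eq_const, neg_dotProduct, Function.const_apply,
        neg_le_neg_iff] at hrow
      linarith
  set ζ := z (.inr ())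
  have hζ : 0 < ζ := by
    simpa [dotProduct, Fintype.sum_sum_type, ζ] using hzc
  have hzM' : z ∘ Sum.inl ᵥ* M = ζ • f := by
    rw [vecMul_fromRows, add_eq_zero_iff_eq_neg] at hzM
    rw [hzM]
    ext s
    simp [vecMul, dotProduct, replicateRow, ζ]
  refine ⟨ζ⁻¹ • (z ∘ Sum.inl), fun i => by
    simpa using mul_nonneg (inv_nonneg.mpr hζ.le) (hz0 (.inl i)), ?_⟩
  rw [smul_vecMul, hzM', smul_smul, inv_mul_cancel₀ hζ.ne', one_smul]

theorem exists_nonneg_vecMul_eq_dotProduct_le {ι σ : Type*} [Fintype ι] [Fintype σ]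
    (M : Matrix ι σ K) (c : ι → K) (f : σ → K) (β : K) (hfeas : ∃ x₀, M *ᵥ x₀ ≤ c)
    (h : ∀ x, M *ᵥ x ≤ c → f ⬝ᵥ x ≤ β) :
    ∃ z, 0 ≤ z ∧ z ᵥ* M = f ∧ z ⬝ᵥ c ≤ β := by
  obtain ⟨x₀, hx₀⟩ := hfeas
  have hrec (d : σ → K) (hd : M *ᵥ d ≤ 0) : f ⬝ᵥ d ≤ 0 :=
    nonpos_of_forall_add_mul_le_s15 (a := f ⬝ᵥ x₀) fun l hl => by
      have hfeas : M *ᵥ (x₀ + l • d) ≤ c := by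
        rw [mulVec_add, mulVec_smul]
        exact add_le_of_le_of_nonpos hx₀ (smul_nonpos_of_nonneg_of_nonpos hl hd)
      simpa [dotProduct_add, dotProduct_smul] using h _ hfeas
  -- homogenization: `M x ≤ μ • c` and `0 ≤ μ` imply `f ⬝ᵥ x ≤ β * μ`
  obtain ⟨z, hz0, hzM⟩ := exists_nonneg_vecMul_eq
    (fromRows (fromCols M (replicateCol Unit (-c))) (replicateRow Unit (Sum.elim 0 fun _ => -1)))
    (Sum.elim f fun _ => -β) fun y hy => by
      set x := y ∘ Sum.inl
      set μ := y (.inr ())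
      have hx : M *ᵥ x ≤ μ • c := fun i => by
        simpa [x, μ, mulVec, dotProduct, replicateCol, mul_comm] using hy (.inl i)
      have hμ : 0 ≤ μ := by
        simpa [μ, mulVec, dotProduct, replicateRow, Fintype.sum_sum_type] using hy (.inr ())
      have hgy : (Sum.elim f fun _ => -β) ⬝ᵥ y = f ⬝ᵥ x - β * μ := by
        simp [dotProduct, Fintype.sum_sum_type, x, μ, sub_eq_add_neg]
      rw [hgy, sub_nonpos]
      rcases hμ.eq_or_lt with hμ | hμ
      · simpa [← hμ] using hrec x (by simpa [← hμ] using hx)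
      · have := h (μ⁻¹ • x) (by
          rw [mulVec_smul, inv_smul_le_iff_of_pos hμ]
          exact hx)
        rwa [dotProduct_smul, inv_smul_le_iff_of_pos hμ, smul_eq_mul, mul_comm] at this
  rw [vecMul_fromRows, vecMul_fromCols] at hzM
  refine ⟨z ∘ Sum.inl, fun i => hz0 _, funext fun s => ?_, ?_⟩
  · simpa [vecMul, dotProduct, replicateRow] using congrFun hzM (.inl s)
  · have hc : -(z ∘ Sum.inl ⬝ᵥ c) - z (.inr ()) = -β := by
      simpa [vecMul, dotProduct, replicateRow, replicateCol, sub_eq_add_neg] using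
        congrFun hzM (.inr ())
    have hζ : 0 ≤ z (.inr ()) := hz0 _
    linarith

end Farkas

end Matrix

section B0mat

variable {m q : ℕ} (B : Matrix (Fin m) (Fin q) ℚ)

theorem vecMul_B0mat_castLE (hq : q ≤ m) (y : Fin m → ℚ) (i : Fin q) :
    (y ᵥ* B0mat m q B) (Fin.castLE hq i) = (y ᵥ* B) i := by
  simp [vecMul, dotProduct, B0mat]

theorem vecMul_B0mat_of_le (y : Fin m → ℚ) (j : Fin m) (hj : q ≤ j) :
    (y ᵥ* B0mat m q B) j = y j := by
  simp [vecMul, dotProduct, B0mat, not_lt.mpr hj, Fin.val_eq_val]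

theorem isUnit_B0mat (hq : q ≤ m)
    (hindep : LinearIndependent ℚ fun i : Fin q => B (Fin.castLE hq i)) :
    IsUnit (B0mat m q B) := by
  suffices hker : ∀ y, y ᵥ* B0mat m q B = 0 → y = 0 by
    rw [← vecMul_injective_iff_isUnit]
    exact fun y₁ y₂ h => sub_eq_zero.mp (hker _ (by rw [sub_vecMul]; exact sub_eq_zero.mpr h))
  intro y hy
  have hhigh (j : Fin m) (hj : q ≤ j) : y j = 0 := by
    rw [← vecMul_B0mat_of_le B y j hj, hy, Pi.zero_apply]
  have hlow : ∀ i, y (Fin.castLE hq i) = 0 := by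
    refine Fintype.linearIndependent_iff.mp hindep _ ?_
    rw [Fintype.sum_of_injective (Fin.castLE hq) (Fin.castLE_injective hq) _ (fun j => y j • B j)
      (fun j hj => ?_) fun i => rfl, ← vecMul_eq_sum]
    · exact funext fun i => by rw [← vecMul_B0mat_castLE B hq, hy, Pi.zero_apply, Pi.zero_apply]
    · rw [hhigh j (not_lt.mp fun hjq => hj ⟨⟨j, hjq⟩, rfl⟩), zero_smul]
  ext j
  rcases lt_or_ge (j : ℕ) q with hj | hj
  · exact hlow ⟨j, hj⟩
  · exact hhigh j hj

end B0mat

section Balas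

variable {m p q : ℕ} (A : Matrix (Fin m) (Fin p) ℚ) (B : Matrix (Fin m) (Fin q) ℚ)
  (c : Fin m → ℚ)

theorem mem_projW0_iff (hq : q ≤ m)
    (hindep : LinearIndependent ℚ fun i : Fin q => B (Fin.castLE hq i)) (v : Fin q → ℚ)
    (v₀ : ℚ) : (v, v₀) ∈ projW0 m p q hq A B c ↔
      ∃ z, 0 ≤ z ∧ z ᵥ* A = 0 ∧ z ᵥ* B = v ∧ z ⬝ᵥ c ≤ v₀ := by
  have hdet := (isUnit_iff_isUnit_det _).mp (isUnit_B0mat B hq hindep)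
  constructor
  · rintro ⟨y, hyv, hA, hnonneg, hc⟩
    refine ⟨y ᵥ* (B0mat m q B)⁻¹, hnonneg, hA, funext fun i => ?_, by linarith⟩
    rw [← vecMul_B0mat_castLE B hq, vecMul_vecMul, nonsing_inv_mul _ hdet, vecMul_one]
    exact hyv i
  · rintro ⟨z, hnonneg, hA, rfl, hc⟩
    have hz : z ᵥ* B0mat m q B ᵥ* (B0mat m q B)⁻¹ = z := by
      rw [vecMul_vecMul, mul_nonsing_inv _ hdet, vecMul_one]
    exact ⟨z ᵥ* B0mat m q B, vecMul_B0mat_castLE B hq z, by rwa [hz], by rwa [hz],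
      by rw [hz]; linarith⟩

theorem forall_mem_projQx_dotProduct_le_iff (hQ : ∃ u x, A *ᵥ u + B *ᵥ x ≤ c)
    (v : Fin q → ℚ) (v₀ : ℚ) : (∀ x ∈ projQx m p q A B c, v ⬝ᵥ x ≤ v₀) ↔
      ∃ z, 0 ≤ z ∧ z ᵥ* A = 0 ∧ z ᵥ* B = v ∧ z ⬝ᵥ c ≤ v₀ := by
  constructor
  · intro h
    obtain ⟨u, x, hux⟩ := hQ
    obtain ⟨z, hnonneg, hz, hc⟩ := exists_nonneg_vecMul_eq_dotProduct_le (fromCols A B) c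
      (Sum.elim 0 v) v₀ ⟨Sum.elim u x, by simpa using hux⟩ fun w hw => by
        simpa [dotProduct, Fintype.sum_sum_type] using
          h (w ∘ Sum.inr) ⟨w ∘ Sum.inl, by simpa using hw⟩
    rw [vecMul_fromCols] at hz
    exact ⟨z, hnonneg, funext fun i => congrFun hz (.inl i), funext fun i => congrFun hz (.inr i),
      hc⟩
  · rintro ⟨z, hnonneg, hA, rfl, hc⟩ x ⟨u, hu⟩
    calc z ᵥ* B ⬝ᵥ x = z ⬝ᵥ (A *ᵥ u + B *ᵥ x) := by
          rw [dotProduct_add, dotProduct_mulVec, hA, zero_dotProduct, zero_add,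
            dotProduct_mulVec]
      _ ≤ z ⬝ᵥ c := dotProduct_le_dotProduct_of_nonneg_left hu hnonneg
      _ ≤ v₀ := hc

end Balas

theorem forall_mem_homConeSet_iff {q : ℕ} {P : Set (Fin q → ℚ)} (hP : P.Nonempty)
    (v : Fin q → ℚ) (t : ℚ) :
    (∀ w ∈ homConeSet q P, v ⬝ᵥ w.1 + t * w.2 ≤ 0) ↔ ∀ x ∈ P, v ⬝ᵥ x + t ≤ 0 := by
  refine ⟨fun h x hx => by simpa using h (x, 1) (.inl ⟨one_pos, by simpa using hx⟩), ?_⟩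
  rintro h ⟨w, s⟩ (⟨hs, hw⟩ | ⟨rfl, hrec⟩)
  · have := mul_le_mul_of_nonneg_left (h _ hw) hs.le
    rwa [dotProduct_smul, smul_eq_mul, mul_zero, mul_add, mul_inv_cancel_left₀ hs.ne',
      mul_comm] at this
  · obtain ⟨x₀, hx₀⟩ := hP
    have : v ⬝ᵥ w ≤ 0 := nonpos_of_forall_add_mul_le_s15 (a := v ⬝ᵥ x₀) (β := -t) fun l hl => by
      have := h _ (hrec x₀ hx₀ l hl)
      rw [dotProduct_add, dotProduct_smul, smul_eq_mul] at this
      linarith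
    simpa using this

theorem balas_revisited_general (m p q : ℕ) (hq : q ≤ m)
    (A : Matrix (Fin m) (Fin p) ℚ) (B : Matrix (Fin m) (Fin q) ℚ)
    (c : Fin m → ℚ)
    (hfulldim : affineSpan ℚ
      {z : (Fin p → ℚ) × (Fin q → ℚ) | A.mulVec z.1 + B.mulVec z.2 ≤ c} = ⊤)
    (hindep : LinearIndependent ℚ (fun i : Fin q => B (Fin.castLE hq i))) :
    { z : (Fin q → ℚ) × ℚ |
        ∀ w ∈ homConeSet q (projQx m p q A B c), z.1 ⬝ᵥ w.1 + z.2 * w.2 ≤ 0 } =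
      { z : (Fin q → ℚ) × ℚ |
        ∃ vv ∈ projW0 m p q hq A B c, z = (vv.1, -vv.2) } := by
  obtain ⟨⟨u, x⟩, hux⟩ := AffineSubspace.nonempty_of_affineSpan_eq_top ℚ _ _ hfulldim
  have hQ : ∃ u x, A *ᵥ u + B *ᵥ x ≤ c := ⟨u, x, hux⟩
  have hP : (projQx m p q A B c).Nonempty := ⟨x, u, hux⟩
  ext ⟨v, t⟩
  simp only [Set.mem_ofPred_eq]
  have hneg : (∃ vv ∈ projW0 m p q hq A B c, (v, t) = (vv.1, -vv.2)) ↔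
      (v, -t) ∈ projW0 m p q hq A B c :=
    ⟨fun ⟨⟨_, _⟩, hvv, h⟩ => by
      obtain ⟨rfl, rfl⟩ := Prod.mk.inj h
      simpa using hvv, fun h => ⟨_, h, by simp⟩⟩
  rw [forall_mem_homConeSet_iff hP, hneg, mem_projW0_iff A B c hq hindep,
    ← forall_mem_projQx_dotProduct_le_iff A B c hQ]
  simp only [le_neg_iff_add_nonpos_right]

/-- Revisited Balas theorem: for a full-dimensional pointed polyhedron
`Q = {(u,x) | A u + B x ≤ c}` with `[A B]` of full column rank and the first
`q` rows of `B` linearly independent, the polar cone of the homogenized cone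
of `proj(Q; x)` equals `{(v, −v₀) | (v, v₀) ∈ proj(W⁰; {v, v₀})}`. -/
theorem balas_revisited (m p q : ℕ) (hq : q ≤ m)
    (A : Matrix (Fin m) (Fin p) ℚ) (B : Matrix (Fin m) (Fin q) ℚ)
    (c : Fin m → ℚ)
    (hfulldim : affineSpan ℚ
      {z : (Fin p → ℚ) × (Fin q → ℚ) | A.mulVec z.1 + B.mulVec z.2 ≤ c} = ⊤)
    (hpointed : (Matrix.fromCols A B).rank = p + q)
    (hindep : LinearIndependent ℚ (fun i : Fin q => B (Fin.castLE hq i))) :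
    { z : (Fin q → ℚ) × ℚ |
        ∀ w ∈ homConeSet q (projQx m p q A B c), z.1 ⬝ᵥ w.1 + z.2 * w.2 ≤ 0 } =
      { z : (Fin q → ℚ) × ℚ |
        ∃ vv ∈ projW0 m p q hq A B c, z = (vv.1, -vv.2) } :=
  balas_revisited_general m p q hq A B c hfulldim hindep
end

section
/- Let Q = {y ∈ Q^n | A y ≤ c} with A ∈ Q^{m×n} of full column rank whose first n rows are linearly independent, and let A₀ = [A, A'] where A' = [e_{n+1},...,e_m] (unit columns), so A₀ is invertible. Let W = {(v, w, v₀) ∈ Q^n × Q^{m−n} × Q | −[vᵀ,wᵀ]A₀⁻¹c + v₀ ≥ 0, [vᵀ,wᵀ]A₀⁻¹ ≥ 0} and let P = proj(W; {v, v₀}) be the initial redundancy test cone. For a subset u of p of the variables y, let W⁰ be the analogous cone built from the partition y = (u, x) (using B₀ from the columns of A corresponding to x, augmented to be invertible). Then the redundancy test cone P_u = proj(W⁰; {v_u, v_u0}) is obtained from P by setting the coefficients of the p variables of v corresponding to u equal to 0; that is, P_u = P|_{v₁ = 0} where v₁ is the subvector of v indexed by u. -/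
open Matrix

/-- Augment an `m × k` matrix (with `k ≤ m`) with the last `m − k` standard
basis columns, producing a square matrix `[[M₁, 0], [M₂, I]]`. -/
def augMat (m k : ℕ) (M : Matrix (Fin m) (Fin k) ℚ) : Matrix (Fin m) (Fin m) ℚ :=
  Matrix.of fun i j =>
    if h : (j : ℕ) < k then M i ⟨(j : ℕ), h⟩
    else if (i : ℕ) = (j : ℕ) then 1 else 0

/-- The first `p` columns of `A` (the columns corresponding to `u`). -/
def firstCols (m n p : ℕ) (hpn : p ≤ n) (A : Matrix (Fin m) (Fin n) ℚ) :
    Matrix (Fin m) (Fin p) ℚ :=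
  Matrix.of fun i j => A i (Fin.castLE hpn j)

/-- The last `n − p` columns of `A` (the columns corresponding to `x`). -/
def lastCols (m n p : ℕ) (hpn : p ≤ n) (A : Matrix (Fin m) (Fin n) ℚ) :
    Matrix (Fin m) (Fin (n - p)) ℚ :=
  Matrix.of fun i j => A i ⟨p + (j : ℕ), by have := j.2; omega⟩

/-- The initial redundancy test cone `P = proj(W; {v, v₀})` where
`W = {(v,w,v₀) | −[vᵀ,wᵀ]A₀⁻¹c + v₀ ≥ 0, [vᵀ,wᵀ]A₀⁻¹ ≥ 0}`;
here `y` plays the role of `[vᵀ, wᵀ]` and `A₀ = [A, e_{n+1}, …, e_m]`. -/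
def initialTestCone (m n : ℕ) (hnm : n ≤ m) (A : Matrix (Fin m) (Fin n) ℚ)
    (c : Fin m → ℚ) : Set ((Fin n → ℚ) × ℚ) :=
  { vv | ∃ y : Fin m → ℚ,
      (∀ i : Fin n, y (Fin.castLE hnm i) = vv.1 i) ∧
      0 ≤ Matrix.vecMul y (augMat m n A)⁻¹ ∧
      0 ≤ -(Matrix.vecMul y (augMat m n A)⁻¹ ⬝ᵥ c) + vv.2 }

/-- The redundancy test cone `P_u = proj(W⁰; {v_u, v_{u0}})` for the
partition `y = (u, x)` of the variables, with `W⁰` built from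
`B₀ = [lastCols A, unit columns]` and `A_u = firstCols A`. -/
def testCone (m n p : ℕ) (hpn : p ≤ n) (hq : n - p ≤ m)
    (A : Matrix (Fin m) (Fin n) ℚ) (c : Fin m → ℚ) :
    Set ((Fin (n - p) → ℚ) × ℚ) :=
  { vv | ∃ y : Fin m → ℚ,
      (∀ i : Fin (n - p), y (Fin.castLE hq i) = vv.1 i) ∧
      Matrix.vecMul (Matrix.vecMul y (augMat m (n - p) (lastCols m n p hpn A))⁻¹)
        (firstCols m n p hpn A) = 0 ∧
      0 ≤ Matrix.vecMul y (augMat m (n - p) (lastCols m n p hpn A))⁻¹ ∧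
      0 ≤ -(Matrix.vecMul y (augMat m (n - p) (lastCols m n p hpn A))⁻¹ ⬝ᵥ c) + vv.2 }

/-- Extend a vector on the `x`-coordinates by zeros on the `u`-coordinates. -/
def extendZero (n p : ℕ) (v2 : Fin (n - p) → ℚ) : Fin n → ℚ :=
  fun j =>
    if h : (j : ℕ) < p then 0
    else v2 ⟨(j : ℕ) - p, by have := j.2; omega⟩

/-!
Both cones are projections of one cone of multipliers. The augmented matrices are invertible, so
substituting `z = y A₀⁻¹` (resp. `z = y B₀⁻¹`) turns the defining conditions into `z ≥ 0`,
`z ⬝ᵥ c ≤ v₀` together with `v = z A` for `P`, and `v_x = z A_x`, `z A_u = 0` for `P_u`. Splitting the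
coordinates of `z A` into the `u`- and `x`-blocks shows that `z A = (0, v_x)` is the same condition.
-/

section augMat

variable {m k : ℕ} (hk : k ≤ m) (M : Matrix (Fin m) (Fin k) ℚ) (z : Fin m → ℚ)

lemma vecMul_augMat_castLE (j : Fin k) : (z ᵥ* augMat m k M) (Fin.castLE hk j) = (z ᵥ* M) j := by
  simp [vecMul, dotProduct, augMat]

lemma vecMul_augMat_of_le {j : Fin m} (hj : k ≤ j) : (z ᵥ* augMat m k M) j = z j := by
  simp [vecMul, dotProduct, augMat, Nat.not_lt.mpr hj, Fin.val_eq_val]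

lemma vecMul_eq_sum_castLE (hz : ∀ j : Fin m, k ≤ j → z j = 0) :
    z ᵥ* M = ∑ i : Fin k, z (Fin.castLE hk i) • M (Fin.castLE hk i) := by
  ext j
  simp only [vecMul, dotProduct, Finset.sum_apply, Pi.smul_apply, smul_eq_mul]
  refine (Fintype.sum_of_injective _ (Fin.castLE_injective hk) _ _ ?_ fun _ => rfl).symm
  rintro i hi
  rw [hz i, zero_mul]
  by_contra! hik
  exact hi ⟨⟨i, hik⟩, rfl⟩

include hk in
lemma isUnit_augMat (hM : LinearIndependent ℚ fun i : Fin k => M (Fin.castLE hk i)) :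
    IsUnit (augMat m k M) := by
  rw [← vecMul_injective_iff_isUnit, ← coe_vecMulLinear, injective_iff_map_eq_zero]
  intro z hz
  replace hz : z ᵥ* augMat m k M = 0 := hz
  have h_tail (j : Fin m) (hj : k ≤ j) : z j = 0 := by
    rw [← vecMul_augMat_of_le M z hj, hz, Pi.zero_apply]
  have h_head (i : Fin k) : z (Fin.castLE hk i) = 0 := by
    refine Fintype.linearIndependent_iff.mp hM (fun i => z (Fin.castLE hk i)) ?_ i
    rw [← vecMul_eq_sum_castLE hk M z h_tail]
    ext j
    rw [← vecMul_augMat_castLE hk, hz, Pi.zero_apply, Pi.zero_apply]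
  funext j
  by_cases hj : (j : ℕ) < k
  · exact h_head ⟨j, hj⟩
  · exact h_tail j (Nat.not_lt.mp hj)

end augMat

lemma exists_vecMul_inv_iff {ι R : Type*} [Fintype ι] [DecidableEq ι] [CommRing R]
    {B : Matrix ι ι R} (hB : IsUnit B) (P : (ι → R) → (ι → R) → Prop) :
    (∃ y, P y (y ᵥ* B⁻¹)) ↔ ∃ z, P (z ᵥ* B) z := by
  have hdet := (isUnit_iff_isUnit_det B).mp hB
  constructor
  · rintro ⟨y, hy⟩
    exact ⟨y ᵥ* B⁻¹, by rwa [vecMul_vecMul, nonsing_inv_mul B hdet, vecMul_one]⟩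
  · rintro ⟨z, hz⟩
    exact ⟨z ᵥ* B, by rwa [vecMul_vecMul, mul_nonsing_inv B hdet, vecMul_one]⟩

lemma mem_initialTestCone_iff {m n : ℕ} (hnm : n ≤ m) (A : Matrix (Fin m) (Fin n) ℚ)
    (c : Fin m → ℚ) (hA : LinearIndependent ℚ fun i : Fin n => A (Fin.castLE hnm i))
    (v : Fin n → ℚ) (v0 : ℚ) :
    (v, v0) ∈ initialTestCone m n hnm A c ↔ ∃ z, z ᵥ* A = v ∧ 0 ≤ z ∧ z ⬝ᵥ c ≤ v0 := by
  simp only [initialTestCone, Set.mem_ofPred_eq, le_neg_add_iff_le]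
  rw [exists_vecMul_inv_iff (isUnit_augMat hnm A hA)
    (fun y z => (∀ i, y (Fin.castLE hnm i) = v i) ∧ 0 ≤ z ∧ z ⬝ᵥ c ≤ v0)]
  simp only [vecMul_augMat_castLE, funext_iff]

lemma mem_testCone_iff {m n p : ℕ} (hpn : p ≤ n) (hq : n - p ≤ m)
    (A : Matrix (Fin m) (Fin n) ℚ) (c : Fin m → ℚ)
    (hB : LinearIndependent ℚ fun i : Fin (n - p) => lastCols m n p hpn A (Fin.castLE hq i))
    (v : Fin (n - p) → ℚ) (v0 : ℚ) :
    (v, v0) ∈ testCone m n p hpn hq A c ↔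
      ∃ z, z ᵥ* lastCols m n p hpn A = v ∧ z ᵥ* firstCols m n p hpn A = 0 ∧ 0 ≤ z ∧
        z ⬝ᵥ c ≤ v0 := by
  simp only [testCone, Set.mem_ofPred_eq, le_neg_add_iff_le]
  rw [exists_vecMul_inv_iff (isUnit_augMat hq _ hB) (fun y z => (∀ i, y (Fin.castLE hq i) = v i) ∧
    z ᵥ* firstCols m n p hpn A = 0 ∧ 0 ≤ z ∧ z ⬝ᵥ c ≤ v0)]
  simp only [vecMul_augMat_castLE, funext_iff]

lemma extendZero_eq_iff {n p : ℕ} (hpn : p ≤ n) (v : Fin (n - p) → ℚ) (w : Fin n → ℚ) :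
    extendZero n p v = w ↔
      (∀ j : Fin (n - p), w ⟨p + j, by omega⟩ = v j) ∧ ∀ j : Fin p, w (Fin.castLE hpn j) = 0 := by
  constructor
  · rintro rfl
    exact ⟨fun j => by simp [extendZero], fun j => by simp [extendZero]⟩
  · rintro ⟨hv, hu⟩
    funext j
    unfold extendZero
    split_ifs with hj
    · exact (hu ⟨j, hj⟩).symm
    · rw [← hv]
      congr 1
      ext
      simp only
      omega

theorem testCone_eq_initialTestCone_restricted_general (m n p : ℕ)
    (hpn : p ≤ n) (hnm : n ≤ m) (hq : n - p ≤ m)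
    (A : Matrix (Fin m) (Fin n) ℚ) (c : Fin m → ℚ)
    (hAindep : LinearIndependent ℚ (fun i : Fin n => A (Fin.castLE hnm i)))
    (hBindep : LinearIndependent ℚ
      (fun i : Fin (n - p) => lastCols m n p hpn A (Fin.castLE hq i))) :
    ∀ (v2 : Fin (n - p) → ℚ) (v0 : ℚ),
      (v2, v0) ∈ testCone m n p hpn hq A c ↔
        (extendZero n p v2, v0) ∈ initialTestCone m n hnm A c := by
  intro v2 v0
  rw [mem_testCone_iff hpn hq A c hBindep, mem_initialTestCone_iff hnm A c hAindep]
  simp only [eq_comm (b := extendZero n p v2), extendZero_eq_iff hpn, ← funext_iff, and_assoc]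
  -- `z ᵥ* firstCols A` and `z ᵥ* lastCols A` are by definition the two coordinate blocks of `z ᵥ* A`
  rfl

/-- The redundancy test cone `P_u` is obtained from the initial redundancy
test cone `P` by setting the coefficients of the `p` variables of `v`
corresponding to `u` equal to `0`: `P_u = P|_{v₁ = 0}`. -/
theorem testCone_eq_initialTestCone_restricted (m n p : ℕ)
    (hpn : p ≤ n) (hnm : n ≤ m) (hq : n - p ≤ m)
    (A : Matrix (Fin m) (Fin n) ℚ) (c : Fin m → ℚ)
    (hrank : A.rank = n)
    (hAindep : LinearIndependent ℚ (fun i : Fin n => A (Fin.castLE hnm i)))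
    (hBindep : LinearIndependent ℚ
      (fun i : Fin (n - p) => lastCols m n p hpn A (Fin.castLE hq i))) :
    ∀ (v2 : Fin (n - p) → ℚ) (v0 : ℚ),
      (v2, v0) ∈ testCone m n p hpn hq A c ↔
        (extendZero n p v2, v0) ∈ initialTestCone m n hnm A c :=
  testCone_eq_initialTestCone_restricted_general m n p hpn hnm hq A c hAindep hBindep
end
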